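/- arXiv:2410.10882 — 9 statements merged into one kernel-verified Lean document; each statement's English description precedes it below -/
import Mathlib

section
/- Let p be an odd prime, ε a quadratic nonresidue mod p, u ≥ 0, and m an integer with p ∤ m. For k < u, the congruence −ε x² + p^{2u+1} y² − ε p^{2u+1} z² ≡ m·p^{2k+1} (mod p^t) has no solutions for t large; i.e., the local density d_{−εx²+p^{2u+1}y²−εp^{2u+1}z², p}(m·p^{2k+1}) = 0. -/
/-!
Reduce modulo `p ^ (2k+2)`. Since `2u + 1 ≥ 2k + 2`, the `y` and `z` terms vanish and the
congruence becomes `ε x² + m p^(2k+1) ≡ 0`. As `p ∤ ε`, this forces `p^(2k+1) ∣ x²`, hence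
`p^(k+1) ∣ x` and `p^(2k+2) ∣ ε x²`, so `p^(2k+2) ∣ m p^(2k+1)`, contradicting `p ∤ m`.
-/

theorem Prime.pow_succ_dvd_of_pow_dvd_sq {M : Type*} [CommMonoidWithZero M] [IsCancelMulZero M]
    {p : M} (hp : Prime p) {x : M} {k : ℕ} (h : p ^ (2 * k + 1) ∣ x ^ 2) : p ^ (k + 1) ∣ x := by
  induction k generalizing x with
  | zero => simpa using hp.dvd_of_dvd_pow (by simpa using h)
  | succ k ih =>
    obtain ⟨y, rfl⟩ := hp.dvd_of_dvd_pow ((dvd_pow_self p (by omega)).trans h)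
    have hy : p ^ (2 * k + 1) ∣ y ^ 2 := by
      rw [show 2 * (k + 1) + 1 = 2 + (2 * k + 1) by ring, pow_add, mul_pow] at h
      exact (mul_dvd_mul_iff_left (pow_ne_zero 2 hp.ne_zero)).mp h
    rw [pow_succ']
    exact mul_dvd_mul_left p (ih hy)

theorem Prime.not_pow_dvd_mul_sq_add_mul_pow {R : Type*} [CommRing R] [IsDomain R] {p a m : R}
    (hp : Prime p) (ha : ¬ p ∣ a) (hm : ¬ p ∣ m) (x : R) (k : ℕ) :
    ¬ p ^ (2 * k + 2) ∣ a * x ^ 2 + m * p ^ (2 * k + 1) := by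
  intro h
  have hax : p ^ (2 * k + 1) ∣ a * x ^ 2 :=
    (dvd_add_left (dvd_mul_left _ _)).mp ((pow_dvd_pow p (by omega)).trans h)
  have hx : p ^ (k + 1) ∣ x := hp.pow_succ_dvd_of_pow_dvd_sq (hp.pow_dvd_of_dvd_mul_left _ ha hax)
  have hax' : p ^ (2 * k + 2) ∣ a * x ^ 2 := by
    rw [show 2 * k + 2 = (k + 1) * 2 by ring, pow_mul]
    exact (pow_dvd_pow_of_dvd hx 2).mul_left a
  rw [dvd_add_right hax', pow_succ, mul_comm m] at h
  exact hm ((mul_dvd_mul_iff_left (pow_ne_zero _ hp.ne_zero)).mp h)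

theorem ZMod.intCast_mul_sq_add_mul_pow_ne_zero {p : ℕ} (hp : p.Prime) {a m : ℤ}
    (ha : ¬ (p : ℤ) ∣ a) (hm : ¬ (p : ℤ) ∣ m) (k : ℕ) (x : ZMod (p ^ (2 * k + 2))) :
    (a : ZMod (p ^ (2 * k + 2))) * x ^ 2 + m * (p : ZMod (p ^ (2 * k + 2))) ^ (2 * k + 1) ≠ 0 := by
  obtain ⟨X, rfl⟩ := ZMod.intCast_surjective x
  have h := (Nat.prime_iff_prime_int.mp hp).not_pow_dvd_mul_sq_add_mul_pow ha hm X k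
  rw [← Nat.cast_pow, ← ZMod.intCast_zmod_eq_zero_iff_dvd] at h
  exact_mod_cast h

theorem localDensity_anisotropic_low_odd_valuation_general (p : ℕ) [Fact p.Prime]
    (ε : ℤ) (hε : legendreSym p ε = -1) (u k : ℕ) (hk : k < u)
    (m : ℤ) (hm : ¬ (p : ℤ) ∣ m) :
    ∃ T : ℕ, ∀ t ≥ T,
      (Nat.card {v : ZMod (p ^ t) × ZMod (p ^ t) × ZMod (p ^ t) //
          -(ε : ZMod (p ^ t)) * v.1 ^ 2 + (p : ZMod (p ^ t)) ^ (2 * u + 1) * v.2.1 ^ 2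
            - (ε : ZMod (p ^ t)) * (p : ZMod (p ^ t)) ^ (2 * u + 1) * v.2.2 ^ 2
            = (m : ZMod (p ^ t)) * (p : ZMod (p ^ t)) ^ (2 * k + 1)} : ℚ)
          / (p : ℚ) ^ (2 * t)
        = 0 := by
  have hp : p.Prime := Fact.out
  have hεp : ¬ (p : ℤ) ∣ ε := fun h => by
    rw [← ZMod.intCast_zmod_eq_zero_iff_dvd, ← legendreSym.eq_zero_iff] at h
    omega
  refine ⟨2 * k + 2, fun t ht => ?_⟩
  rw [div_eq_zero_iff, Nat.cast_eq_zero, Nat.card_eq_zero]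
  refine Or.inl (Or.inl ⟨fun ⟨⟨x, y, z⟩, hv⟩ => ?_⟩)
  let φ := ZMod.castHom (pow_dvd_pow p ht) (ZMod (p ^ (2 * k + 2)))
  have hpu : (p : ZMod (p ^ (2 * k + 2))) ^ (2 * u + 1) = 0 := by
    rw [← Nat.cast_pow, ZMod.natCast_eq_zero_iff]
    exact pow_dvd_pow p (by omega)
  have hφ := congrArg φ hv
  simp only [map_sub, map_add, map_mul, map_neg, map_pow, map_intCast, map_natCast, hpu] at hφ
  exact ZMod.intCast_mul_sq_add_mul_pow_ne_zero hp hεp hm k (φ x) (by linear_combination -hφ)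

/-- Let `p` be an odd prime, `ε` a quadratic nonresidue mod `p`, `u, k ≥ 0` with `k < u`,
and `m` an integer with `p ∤ m`. Then the local density of
`−ε x² + p^(2u+1) y² − ε p^(2u+1) z²` at `m·p^(2k+1)` is `0`. -/
theorem localDensity_anisotropic_low_odd_valuation (p : ℕ) [Fact p.Prime] (hp2 : p ≠ 2)
    (ε : ℤ) (hε : legendreSym p ε = -1) (u k : ℕ) (hk : k < u)
    (m : ℤ) (hm : ¬ (p : ℤ) ∣ m) :
    ∃ T : ℕ, ∀ t ≥ T,
      (Nat.card {v : ZMod (p ^ t) × ZMod (p ^ t) × ZMod (p ^ t) //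
          -(ε : ZMod (p ^ t)) * v.1 ^ 2 + (p : ZMod (p ^ t)) ^ (2 * u + 1) * v.2.1 ^ 2
            - (ε : ZMod (p ^ t)) * (p : ZMod (p ^ t)) ^ (2 * u + 1) * v.2.2 ^ 2
            = (m : ZMod (p ^ t)) * (p : ZMod (p ^ t)) ^ (2 * k + 1)} : ℚ)
          / (p : ℚ) ^ (2 * t)
        = 0 :=
  localDensity_anisotropic_low_odd_valuation_general p ε hε u k hk m hm
end

section
/- Let p be an odd prime, ε a quadratic nonresidue mod p, u ≥ 0, and m with p ∤ m. For k ≤ u, the local density of the form −ε x² + p^{2u+1} y² − ε p^{2u+1} z² at n = m·p^{2k} equals p^k·(1 − (−m/p)), where (−m/p) is the Legendre symbol. -/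
/-!
For fixed `y, z` the equation reads `ε x² = p ^ (2k) c` with `c ≡ -m (mod p)`, because `k ≤ u`.
Its solutions modulo `p ^ t` are the `x = p ^ k x'` with `x'` a square root of `c / ε` modulo
`p ^ (t - 2k)`, `x'` being determined modulo `p ^ (t - k)`. By Hensel's lemma `c / ε` has
`1 + (c ε / p) = 1 - (-m / p)` square roots modulo every power of `p`, so each of the `p ^ (2t)`
pairs `(y, z)` carries `p ^ k (1 - (-m / p))` solutions.
-/

open Finset

theorem Int.exists_sq_eq_mod_pow_of_isCoprime {n c a : ℤ} (ha : IsCoprime (2 * a) n)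
    (h : n ∣ c - a ^ 2) {s : ℕ} (hs : 1 ≤ s) : ∃ b, n ^ s ∣ c - b ^ 2 ∧ n ∣ b - a := by
  induction s, hs using Nat.le_induction with
  | base => exact ⟨a, by simpa using h, by simp⟩
  | succ s hs ih =>
    obtain ⟨b, ⟨w, hw⟩, j, hj⟩ := ih
    obtain ⟨u, v, huv⟩ : IsCoprime (2 * b) n := by
      rw [show 2 * b = 2 * a + n * (2 * j) by linear_combination 2 * hj]
      exact ha.add_mul_left_left _
    obtain ⟨r, rfl⟩ : ∃ r, s = r + 1 := ⟨s - 1, by omega⟩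
    -- Newton step: `u` inverts `2 b` modulo `n`
    refine ⟨b + n ^ (r + 1) * (w * u), ⟨v * w - n ^ r * (w * u) ^ 2, ?_⟩, ?_⟩
    · linear_combination hw - n ^ (r + 1) * w * huv
    · exact ⟨j + n ^ r * (w * u), by linear_combination hj⟩

theorem AddMonoidHom.natCard_subtype_comp_mul_natCard {G H : Type*} [AddGroup G] [Finite G]
    [AddGroup H] (f : G →+ H) (hf : Function.Surjective f) (P : H → Prop) :
    Nat.card {g // P (f g)} * Nat.card H = Nat.card G * Nat.card {h // P h} := by
  classical
  have : Fintype G := Fintype.ofFinite G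
  have : Fintype H := @Fintype.ofFinite H (Finite.of_surjective f hf)
  have hfiber (Q : H → Prop) [DecidablePred Q] :
      #{g | Q (f g)} = #{h | Q h} * #{g | f g = 0} := by
    rw [card_eq_sum_card_fiberwise (f := f) (t := {h | Q h}) fun g hg => by simpa using hg,
      ← smul_eq_mul, ← sum_const]
    refine sum_congr rfl fun h hh => ?_
    rw [← AddMonoidHom.card_fiber_eq_of_mem_range f (hf h) ⟨0, map_zero f⟩, filter_filter]
    congr 1
    ext g
    simp_all
  have hG := hfiber fun _ => True
  simp only [filter_true] at hG
  rw [Nat.subtype_card _ fun g => mem_filter_univ g, Nat.subtype_card _ fun h => mem_filter_univ h,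
    Nat.card_eq_fintype_card, Nat.card_eq_fintype_card, ← card_univ, ← card_univ, hfiber P, hG]
  ring

theorem Nat.card_subtype_prod_eq_sum_snd {α β : Type*} [Finite α] [Fintype β] (P : α × β → Prop) :
    Nat.card {v // P v} = ∑ b, Nat.card {a // P (a, b)} := by
  rw [← Nat.card_sigma]
  exact Nat.card_congr ((Equiv.subtypeEquiv (Equiv.prodComm α β) fun _ => Iff.rfl).trans
    (Equiv.subtypeProdEquivSigmaSubtype fun b a => P (a, b)))

noncomputable def numSqrtsMod (n : ℕ) (c : ℤ) : ℕ :=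
  Nat.card {x : ZMod n // x ^ 2 = c}

theorem ZMod.intCast_mul_sq_eq_iff (q M : ℕ) [NeZero q] (v c : ℤ) :
    (((q * v : ℤ) : ZMod (q ^ 2 * M))) ^ 2 = ((q ^ 2 * c : ℤ) : ZMod (q ^ 2 * M)) ↔
      (v : ZMod M) ^ 2 = c := by
  rw [← Int.cast_pow, ← Int.cast_pow, ZMod.intCast_eq_intCast_iff_dvd_sub,
    ZMod.intCast_eq_intCast_iff_dvd_sub,
    show (q : ℤ) ^ 2 * c - (q * v) ^ 2 = q ^ 2 * (c - v ^ 2) by ring]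
  push_cast
  exact mul_dvd_mul_iff_left (by simp [NeZero.ne q])

/-- The square roots of `q ^ 2 * c` modulo `q ^ 2 * M` are the `q * y` with `y` a square root of
`c` modulo `M`, determined modulo `q * M`. -/
theorem numSqrtsMod_sq_mul (q M : ℕ) [NeZero q] [NeZero M] (c : ℤ) :
    numSqrtsMod (q ^ 2 * M) (q ^ 2 * c) = q * numSqrtsMod M c := by
  let π := ZMod.castHom (dvd_mul_left M q) (ZMod M)
  have hlifts : Nat.card {y : ZMod (q * M) // π y ^ 2 = c} = q * numSqrtsMod M c := by
    have := π.toAddMonoidHom.natCard_subtype_comp_mul_natCard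
      (ZMod.castHom_surjective (dvd_mul_left M q)) fun z => z ^ 2 = c
    rw [Nat.card_zmod, Nat.card_zmod] at this
    exact Nat.eq_of_mul_eq_mul_right (NeZero.pos M) (by rw [numSqrtsMod]; linear_combination this)
  rw [← hlifts]
  symm
  refine Nat.card_eq_of_bijective (fun y => ⟨((q * y.1.val : ℕ) : ZMod (q ^ 2 * M)), ?_⟩) ⟨?_, ?_⟩
  · have hy : ((y.1.val : ℤ) : ZMod M) ^ 2 = c := by
      rw [Int.cast_natCast, ← ZMod.cast_eq_val]
      exact y.2
    simpa using (ZMod.intCast_mul_sq_eq_iff q M _ c).mpr hy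
  · rintro ⟨y₁, _⟩ ⟨y₂, _⟩ h
    have hlt (y : ZMod (q * M)) : q * y.val < q ^ 2 * M := by
      rw [sq, mul_assoc]
      exact Nat.mul_lt_mul_of_pos_left (ZMod.val_lt y) (NeZero.pos q)
    replace h := congrArg (fun x => ZMod.val x.1) h
    simp only [ZMod.val_natCast, Nat.mod_eq_of_lt (hlt _)] at h
    exact Subtype.ext (ZMod.val_injective _ (Nat.eq_of_mul_eq_mul_left (NeZero.pos q) h))
  · rintro ⟨x, hx⟩
    obtain ⟨v, hv⟩ : q ∣ x.val := by
      rw [← ZMod.natCast_zmod_val x, ← Int.cast_natCast, ← Int.cast_pow,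
        ZMod.intCast_eq_intCast_iff_dvd_sub] at hx
      have hq : (q : ℤ) ^ 2 ∣ (x.val : ℤ) ^ 2 := by
        have := (dvd_mul_right ((q : ℤ) ^ 2) M).trans (by exact_mod_cast hx)
        simpa using (dvd_mul_right _ c).sub this
      rw [← Nat.pow_dvd_pow_iff two_ne_zero]
      exact_mod_cast hq
    have hvlt : v < q * M := by
      refine Nat.lt_of_mul_lt_mul_left (a := q) ?_
      rw [← hv, ← mul_assoc, ← sq]
      exact ZMod.val_lt x
    have hxv : x = ((q * v : ℤ) : ZMod (q ^ 2 * M)) := by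
      rw [← ZMod.natCast_zmod_val x, hv]
      push_cast
      rfl
    refine ⟨⟨v, ?_⟩, ?_⟩
    · rw [map_natCast, ← Int.cast_natCast]
      exact (ZMod.intCast_mul_sq_eq_iff q M v c).mp (hxv ▸ hx)
    · rw [Subtype.mk.injEq, ZMod.val_natCast, Nat.mod_eq_of_lt hvlt, ← hv, ZMod.natCast_zmod_val]

section prime
variable {p : ℕ} [Fact p.Prime]

theorem numSqrtsMod_prime (hp2 : p ≠ 2) (c : ℤ) :
    (numSqrtsMod p c : ℤ) = legendreSym p c + 1 := by
  rw [← legendreSym.card_sqrts p hp2 c, numSqrtsMod, ← Nat.card_eq_card_toFinset]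
  rfl

theorem isCoprime_two_mul_of_dvd_sub_sq (hp2 : p ≠ 2) {b c : ℤ} (hc : ¬ (p : ℤ) ∣ c)
    (h : (p : ℤ) ∣ c - b ^ 2) : IsCoprime (2 * b) p := by
  have hprime : Prime (p : ℤ) := Nat.prime_iff_prime_int.mp Fact.out
  refine (hprime.coprime_iff_not_dvd.mpr fun h2b => ?_).symm
  rcases hprime.dvd_mul.mp h2b with h2 | hb
  · exact hp2 ((Nat.prime_dvd_prime_iff_eq Fact.out Nat.prime_two).mp (by exact_mod_cast h2))
  · exact hc (by simpa using h.add (dvd_pow hb two_ne_zero))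

/-- Reduction modulo `p` is a bijection between the square roots of a unit `c` modulo `p ^ s`
and modulo `p`: it is onto by Hensel's lemma, and one-to-one because the sum of two square roots
with the same reduction is a unit. -/
theorem numSqrtsMod_prime_pow (hp2 : p ≠ 2) {c : ℤ} (hc : ¬ (p : ℤ) ∣ c) {s : ℕ} (hs : s ≠ 0) :
    numSqrtsMod (p ^ s) c = numSqrtsMod p c := by
  let π := ZMod.castHom (dvd_pow_self p hs) (ZMod p)
  refine Nat.card_eq_of_bijective (fun x => ⟨π x.1, by rw [← map_pow, x.2, map_intCast]⟩)
    ⟨?_, ?_⟩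
  · rintro ⟨x₁, h₁⟩ ⟨x₂, h₂⟩ heq
    obtain ⟨b₁, rfl⟩ := ZMod.intCast_surjective x₁
    obtain ⟨b₂, rfl⟩ := ZMod.intCast_surjective x₂
    simp only [Subtype.mk.injEq, map_intCast] at heq ⊢
    rw [ZMod.intCast_eq_intCast_iff_dvd_sub] at heq ⊢
    rw [← Int.cast_pow, ZMod.intCast_eq_intCast_iff_dvd_sub] at h₁ h₂
    push_cast at h₁ h₂ ⊢
    obtain ⟨j, hj⟩ := heq
    have hcop : IsCoprime (b₂ + b₁) ((p : ℤ) ^ s) := by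
      have h2b := isCoprime_two_mul_of_dvd_sub_sq hp2 hc ((dvd_pow_self (p : ℤ) hs).trans h₁)
      rw [show b₂ + b₁ = 2 * b₁ + p * j by linear_combination hj]
      exact (h2b.add_mul_left_left j).pow_right
    refine hcop.symm.dvd_of_dvd_mul_left ?_
    rw [show (b₂ + b₁) * (b₂ - b₁) = (c - b₁ ^ 2) - (c - b₂ ^ 2) by ring]
    exact h₁.sub h₂
  · rintro ⟨x, hx⟩
    obtain ⟨a, rfl⟩ := ZMod.intCast_surjective x
    rw [← Int.cast_pow, ZMod.intCast_eq_intCast_iff_dvd_sub] at hx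
    obtain ⟨b, hb, hba⟩ := Int.exists_sq_eq_mod_pow_of_isCoprime
      (isCoprime_two_mul_of_dvd_sub_sq hp2 hc hx) hx (Nat.one_le_iff_ne_zero.mpr hs)
    refine ⟨⟨b, ?_⟩, ?_⟩
    · rw [← Int.cast_pow, ZMod.intCast_eq_intCast_iff_dvd_sub]
      exact_mod_cast hb
    · simp only [Subtype.mk.injEq, map_intCast, π]
      exact ((ZMod.intCast_eq_intCast_iff_dvd_sub _ _ _).mpr hba).symm

theorem numSqrtsMod_prime_pow_mul (hp2 : p ≠ 2) {c : ℤ} (hc : ¬ (p : ℤ) ∣ c) {k t : ℕ}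
    (h : 2 * k < t) :
    (numSqrtsMod (p ^ t) (p ^ (2 * k) * c) : ℤ) = p ^ k * (legendreSym p c + 1) := by
  have : NeZero p := ⟨(Fact.out : p.Prime).ne_zero⟩
  rw [show p ^ t = (p ^ k) ^ 2 * p ^ (t - 2 * k) by rw [← pow_mul, ← pow_add]; congr 1; omega,
    show (p : ℤ) ^ (2 * k) = ((p ^ k : ℕ) : ℤ) ^ 2 by push_cast; ring, numSqrtsMod_sq_mul,
    numSqrtsMod_prime_pow hp2 hc (by omega)]
  push_cast
  rw [numSqrtsMod_prime hp2]

theorem legendreSym_add_mul_self (x y : ℤ) : legendreSym p (x + p * y) = legendreSym p x := by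
  simp [legendreSym]

theorem legendreSym_eq_zero_iff_dvd (x : ℤ) : legendreSym p x = 0 ↔ (p : ℤ) ∣ x :=
  (legendreSym.eq_zero_iff p x).trans (ZMod.intCast_zmod_eq_zero_iff_dvd x p)

theorem legendreSym_mul_eq_of_dvd_mul_sub_one {a e : ℤ} (h : (p : ℤ) ∣ a * e - 1) (c : ℤ) :
    legendreSym p (a * c) = legendreSym p (e * c) := by
  obtain ⟨j, hj⟩ := h
  have hae : legendreSym p (a * e) = 1 := by
    rw [show a * e = 1 + p * j by linear_combination hj, legendreSym_add_mul_self,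
      legendreSym.at_one]
  have he : legendreSym p e ^ 2 = 1 := by
    refine legendreSym.sq_one p fun he => ?_
    rw [legendreSym.mul, (legendreSym.eq_zero_iff p e).mpr he, mul_zero] at hae
    exact zero_ne_one hae
  calc legendreSym p (a * c) = legendreSym p (a * c) * legendreSym p e ^ 2 := by
        rw [he, mul_one]
    _ = legendreSym p (a * e) * legendreSym p (e * c) := by simp only [legendreSym.mul]; ring
    _ = legendreSym p (e * c) := by rw [hae, one_mul]

theorem natCard_mul_sq_eq_prime_pow_mul (hp2 : p ≠ 2) {e c : ℤ} (he : ¬ (p : ℤ) ∣ e)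
    (hc : ¬ (p : ℤ) ∣ c) {k t : ℕ} (h : 2 * k < t) :
    (Nat.card {x : ZMod (p ^ t) //
        (e : ZMod (p ^ t)) * x ^ 2 = ((p ^ (2 * k) * c : ℤ) : ZMod (p ^ t))} : ℤ) =
      p ^ k * (legendreSym p (e * c) + 1) := by
  have hprime : Prime (p : ℤ) := Nat.prime_iff_prime_int.mp Fact.out
  obtain ⟨r, a, hra⟩ := (hprime.coprime_iff_not_dvd.mpr he).pow_left (m := t)
  have hdvd : (p : ℤ) ^ t ∣ a * e - 1 := ⟨-r, by linear_combination hra⟩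
  have hae : (a : ZMod (p ^ t)) * e = 1 := by
    rw [← Int.cast_mul, ← Int.cast_one, eq_comm, ZMod.intCast_eq_intCast_iff_dvd_sub]
    exact_mod_cast hdvd
  have hleg := legendreSym_mul_eq_of_dvd_mul_sub_one ((dvd_pow_self _ (by omega)).trans hdvd) c
  have hac : ¬ (p : ℤ) ∣ a * c := by
    rw [← legendreSym_eq_zero_iff_dvd, hleg, legendreSym.mul, mul_eq_zero,
      legendreSym_eq_zero_iff_dvd, legendreSym_eq_zero_iff_dvd]
    tauto
  have hsq (x : ZMod (p ^ t)) :
      (e : ZMod (p ^ t)) * x ^ 2 = ((p ^ (2 * k) * c : ℤ) : ZMod (p ^ t)) ↔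
        x ^ 2 = ((p ^ (2 * k) * (a * c) : ℤ) : ZMod (p ^ t)) := by
    push_cast
    constructor <;> intro hx
    · linear_combination a * hx - x ^ 2 * hae
    · linear_combination e * hx + (p : ZMod (p ^ t)) ^ (2 * k) * c * hae
  rw [Nat.card_congr (Equiv.subtypeEquivRight hsq), ← hleg]
  exact numSqrtsMod_prime_pow_mul hp2 hac h

theorem natCard_anisotropic_fiber (hp2 : p ≠ 2) {ε : ℤ} (hε : legendreSym p ε = -1) {m : ℤ}
    (hm : ¬ (p : ℤ) ∣ m) {u k t : ℕ} (hk : k ≤ u) (ht : 2 * k < t) (y z : ZMod (p ^ t)) :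
    (Nat.card {x : ZMod (p ^ t) //
        -(ε : ZMod (p ^ t)) * x ^ 2 + (p : ZMod (p ^ t)) ^ (2 * u + 1) * y ^ 2
          - (ε : ZMod (p ^ t)) * (p : ZMod (p ^ t)) ^ (2 * u + 1) * z ^ 2
          = (m : ZMod (p ^ t)) * (p : ZMod (p ^ t)) ^ (2 * k)} : ℚ) =
      p ^ k * (1 - legendreSym p (-m)) := by
  obtain ⟨d, rfl⟩ : ∃ d, u = k + d := ⟨u - k, by omega⟩
  obtain ⟨Y, rfl⟩ := ZMod.intCast_surjective y
  obtain ⟨Z, rfl⟩ := ZMod.intCast_surjective z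
  have hε0 : ¬ (p : ℤ) ∣ ε := by rw [← legendreSym_eq_zero_iff_dvd, hε]; norm_num
  have hc_leg := legendreSym_add_mul_self (p := p) (-m) (p ^ (2 * d) * (Y ^ 2 - ε * Z ^ 2))
  have hc : ¬ (p : ℤ) ∣ -m + p * (p ^ (2 * d) * (Y ^ 2 - ε * Z ^ 2)) := by
    rwa [← legendreSym_eq_zero_iff_dvd, hc_leg, legendreSym_eq_zero_iff_dvd, dvd_neg]
  have hcount := natCard_mul_sq_eq_prime_pow_mul hp2 hε0 hc ht
  rw [legendreSym.mul, hε, hc_leg] at hcount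
  rw [Nat.card_congr (Equiv.subtypeEquivRight fun x => ?_)]
  · rw [← Int.cast_natCast, hcount]
    push_cast
    ring
  · push_cast
    constructor <;> intro hx <;> linear_combination -hx

end prime

/-- Let `p` be an odd prime, `ε` a quadratic nonresidue mod `p`, `0 ≤ k ≤ u`,
and `m` with `p ∤ m`. The local density of `−ε x² + p^(2u+1) y² − ε p^(2u+1) z²`
at `n = m·p^(2k)` equals `p^k · (1 − (−m/p))`. -/
theorem localDensity_anisotropic_low_even_valuation (p : ℕ) [Fact p.Prime] (hp2 : p ≠ 2)
    (ε : ℤ) (hε : legendreSym p ε = -1) (u k : ℕ) (hk : k ≤ u)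
    (m : ℤ) (hm : ¬ (p : ℤ) ∣ m) :
    ∃ T : ℕ, ∀ t ≥ T,
      (Nat.card {v : ZMod (p ^ t) × ZMod (p ^ t) × ZMod (p ^ t) //
          -(ε : ZMod (p ^ t)) * v.1 ^ 2 + (p : ZMod (p ^ t)) ^ (2 * u + 1) * v.2.1 ^ 2
            - (ε : ZMod (p ^ t)) * (p : ZMod (p ^ t)) ^ (2 * u + 1) * v.2.2 ^ 2
            = (m : ZMod (p ^ t)) * (p : ZMod (p ^ t)) ^ (2 * k)} : ℚ)
          / (p : ℚ) ^ (2 * t)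
        = (p : ℚ) ^ k * (1 - (legendreSym p (-m) : ℚ)) := by
  refine ⟨2 * k + 1, fun t ht => ?_⟩
  have hp0 : (p : ℚ) ≠ 0 := by exact_mod_cast (Fact.out : p.Prime).ne_zero
  rw [Nat.card_subtype_prod_eq_sum_snd, Nat.cast_sum, Fintype.sum_prod_type,
    div_eq_iff (pow_ne_zero _ hp0)]
  simp only [natCard_anisotropic_fiber hp2 hε hm hk (show 2 * k < t by omega), sum_const,
    card_univ, ZMod.card, nsmul_eq_mul]
  push_cast
  ring
end

section
/- Let p be an odd prime and v a nonnegative even integer, and m with p ∤ m. For 2k < v, the local density of the form −x² − p^v·y·z at n = m·p^{2k} equals p^k·(1 + (−m/p)), and at n = m·p^{2k+1} with 2k+1 < v it equals 0. -/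
/-!
Fix `y, z`. Since `2k < v`, the equation reads `x² = -p^(2k) m'` (resp. `-p^(2k+1) m'`) with
`m' = m + p^(v-2k) y z ≡ m (mod p)`, so every fibre over `(y, z)` has as many solutions `x` as
`x² = -p^(2k) m` has modulo `p^t`. Each such `x` is `p^k u` with `u² ≡ -m' (mod p^(t-2k))`, and
each residue of `u` modulo `p^(t-2k)` lifts to `p^k` values modulo `p^(t-k)`. Modulo a power of
an odd prime a unit has either no square root or exactly the two roots `±u₀`, and by Hensel's
lemma a root exists iff one exists modulo `p`; this gives `1 + (-m/p)` roots. With the odd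
exponent `2k+1` there is no root at all, as the `p`-adic valuation of a square is even.
-/

lemma Nat.Prime.not_intCast_dvd_two {p : ℕ} (hp : p.Prime) (hp2 : p ≠ 2) : ¬ (p : ℤ) ∣ 2 :=
  fun h => hp2 ((Nat.prime_dvd_prime_iff_eq hp Nat.prime_two).mp (by exact_mod_cast h))

lemma Int.not_sq_dvd_sq_add_mul {p m : ℤ} (hp : Prime p) (hm : ¬ p ∣ m) (y : ℤ) :
    ¬ p ^ 2 ∣ y ^ 2 + m * p := by
  intro h
  have hy : p ∣ y := hp.dvd_of_dvd_pow (n := 2)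
    ((dvd_add_left (dvd_mul_left p m)).mp ((dvd_pow_self p two_ne_zero).trans h))
  have hmp : p * p ∣ p * m := by
    rw [← sq, mul_comm p m]
    exact (dvd_add_right (pow_dvd_pow_of_dvd hy 2)).mp h
  exact hm ((mul_dvd_mul_iff_left hp.ne_zero).mp hmp)

lemma Int.not_dvd_add_pow_mul {p m : ℤ} (hm : ¬ p ∣ m) {e : ℕ} (he : e ≠ 0) (c : ℤ) :
    ¬ p ∣ m + p ^ e * c := by
  rwa [dvd_add_left ((dvd_pow_self _ he).mul_right c)]

section FiberCount

variable {G H : Type*} [AddGroup G] [Finite G] [AddGroup H]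

lemma AddMonoidHom.card_comp_eq_card_ker_mul (f : G →+ H) (P : H → Prop) :
    Nat.card {g // P (f g)} = Nat.card f.ker * Nat.card {h // h ∈ f.range ∧ P h} := by
  have : Finite {h // h ∈ f.range ∧ P h} :=
    Finite.of_surjective (fun g : {g // P (f g)} => ⟨f g, ⟨g, rfl⟩, g.2⟩)
      (by rintro ⟨h, ⟨g, rfl⟩, hP⟩; exact ⟨⟨g, hP⟩, rfl⟩)
  have := Fintype.ofFinite {h // h ∈ f.range ∧ P h}
  have e : {g // P (f g)} ≃ Σ h : {h // h ∈ f.range ∧ P h}, f ⁻¹' {h.1} :=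
    { toFun := fun g => ⟨⟨f g, ⟨g, rfl⟩, g.2⟩, ⟨g, rfl⟩⟩
      invFun := fun s => ⟨s.2.1, by rw [show f s.2.1 = s.1.1 from s.2.2]; exact s.1.2.2⟩
      left_inv := fun _ => rfl
      right_inv := by
        rintro ⟨⟨h, hr, hP⟩, g, hg⟩
        obtain rfl : f g = h := hg
        rfl }
  have hfiber : ∀ h : {h // h ∈ f.range ∧ P h}, Nat.card (f ⁻¹' {h.1}) = Nat.card f.ker := by
    rintro ⟨h, ⟨g, rfl⟩, -⟩
    exact Nat.card_congr (f.fiberEquivKer g)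
  rw [Nat.card_congr e, Nat.card_sigma, Finset.sum_congr rfl fun h _ => hfiber h,
    Finset.sum_const, Finset.card_univ, ← Nat.card_eq_fintype_card, smul_eq_mul, mul_comm]

lemma AddMonoidHom.card_comp_eq_card_ker_mul_of_surjective {f : G →+ H}
    (hf : Function.Surjective f) (P : H → Prop) :
    Nat.card {g // P (f g)} = Nat.card f.ker * Nat.card {h // P h} := by
  rw [f.card_comp_eq_card_ker_mul P]
  simp only [AddMonoidHom.mem_range, hf _, true_and]

end FiberCount

namespace ZMod

section Reduction

variable {N d n : ℕ} [NeZero N]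

lemma card_ker_castHom (hN : d * n = N) :
    Nat.card (castHom (Dvd.intro_left d hN) (ZMod n)).toAddMonoidHom.ker = d := by
  have hn : n ≠ 0 := by rintro rfl; exact NeZero.ne N (by simp [← hN])
  have := AddMonoidHom.card_comp_eq_card_ker_mul_of_surjective
    (f := (castHom (Dvd.intro_left d hN) (ZMod n)).toAddMonoidHom) (ringHom_surjective _)
    (fun _ => True)
  simp only [Nat.card_congr (Equiv.subtypeUnivEquiv fun _ => trivial), Nat.card_zmod] at this
  exact Nat.eq_of_mul_eq_mul_right (Nat.pos_of_ne_zero hn) (hN.trans this).symm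

lemma card_castHom_comp (hN : d * n = N) (P : ZMod n → Prop) :
    Nat.card {x : ZMod N // P (castHom (Dvd.intro_left d hN) (ZMod n) x)} =
      d * Nat.card {y // P y} := by
  have := AddMonoidHom.card_comp_eq_card_ker_mul_of_surjective
    (f := (castHom (Dvd.intro_left d hN) (ZMod n)).toAddMonoidHom) (ringHom_surjective _) P
  rwa [card_ker_castHom hN] at this

lemma natCast_mul_eq_zero_iff (hN : d * n = N) (a : ZMod N) :
    (d : ZMod N) * a = 0 ↔ castHom (Dvd.intro_left d hN) (ZMod n) a = 0 := by
  have hd : (d : ℤ) ≠ 0 := by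
    rintro h; exact NeZero.ne N (by simp [← hN, (by exact_mod_cast h : d = 0)])
  obtain ⟨A, rfl⟩ := intCast_surjective a
  rw [map_intCast, ← Int.cast_natCast, ← Int.cast_mul, intCast_zmod_eq_zero_iff_dvd,
    intCast_zmod_eq_zero_iff_dvd, ← hN, Nat.cast_mul, mul_dvd_mul_iff_left hd]

lemma card_natCast_mul_comp (hN : d * n = N) (Q : ZMod N → Prop) :
    Nat.card {y : ZMod N // Q (d * y)} =
      d * Nat.card {x : ZMod N // (d : ZMod N) ∣ x ∧ Q x} := by
  have hker : (AddMonoidHom.mulLeft (d : ZMod N)).ker =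
      (castHom (Dvd.intro_left d hN) (ZMod n)).toAddMonoidHom.ker := by
    ext a
    exact natCast_mul_eq_zero_iff hN a
  have := (AddMonoidHom.mulLeft (d : ZMod N)).card_comp_eq_card_ker_mul Q
  rw [hker, card_ker_castHom hN] at this
  simpa [Dvd.dvd, eq_comm] using this

end Reduction

lemma pow_dvd_of_sq_add_mul_pow_eq_zero {p k t : ℕ} (hkt : 2 * k ≤ t) {c : ℤ}
    {x : ZMod (p ^ t)} (h : x ^ 2 + c * (p : ZMod (p ^ t)) ^ (2 * k) = 0) :
    (p : ZMod (p ^ t)) ^ k ∣ x := by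
  obtain ⟨X, rfl⟩ := intCast_surjective x
  have hX : ((p ^ t : ℕ) : ℤ) ∣ X ^ 2 + c * p ^ (2 * k) := by
    rw [← intCast_zmod_eq_zero_iff_dvd]
    push_cast
    exact h
  push_cast at hX
  have hsq : ((p : ℤ) ^ k) ^ 2 ∣ X ^ 2 := by
    rw [← pow_mul, mul_comm]
    exact (dvd_add_left (dvd_mul_left _ _)).mp ((pow_dvd_pow _ hkt).trans hX)
  obtain ⟨Y, rfl⟩ := (Int.pow_dvd_pow_iff two_ne_zero).mp hsq
  exact ⟨Y, by push_cast; ring⟩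

section PrimePower

variable {p : ℕ} [hp : Fact p.Prime] {s : ℕ}

lemma isUnit_intCast_prime_pow_iff (hs : s ≠ 0) (a : ℤ) :
    IsUnit (a : ZMod (p ^ s)) ↔ ¬ (p : ℤ) ∣ a := by
  rw [coe_int_isUnit_iff_isCoprime, Nat.cast_pow,
    IsCoprime.pow_left_iff (Nat.pos_of_ne_zero hs),
    Prime.coprime_iff_not_dvd (Nat.prime_iff_prime_int.mp hp.out)]

lemma isUnit_or_isUnit_of_isUnit_add (hs : s ≠ 0) {a b : ZMod (p ^ s)} (h : IsUnit (a + b)) :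
    IsUnit a ∨ IsUnit b := by
  obtain ⟨A, rfl⟩ := intCast_surjective a
  obtain ⟨B, rfl⟩ := intCast_surjective b
  rw [← Int.cast_add, isUnit_intCast_prime_pow_iff hs] at h
  simp only [isUnit_intCast_prime_pow_iff hs]
  by_contra! hAB
  exact h (dvd_add hAB.1 hAB.2)

lemma isUnit_two_of_prime_pow (hp2 : p ≠ 2) (hs : s ≠ 0) : IsUnit (2 : ZMod (p ^ s)) := by
  exact_mod_cast (isUnit_intCast_prime_pow_iff hs 2).mpr (hp.out.not_intCast_dvd_two hp2)

lemma eq_or_eq_neg_of_sq_eq_sq (hp2 : p ≠ 2) (hs : s ≠ 0) {u u₀ : ZMod (p ^ s)}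
    (hu₀ : IsUnit u₀) (h : u ^ 2 = u₀ ^ 2) : u = u₀ ∨ u = -u₀ := by
  have hu : IsUnit u := (isUnit_pow_iff two_ne_zero).mp (h ▸ hu₀.pow 2)
  have hsum : IsUnit ((u - u₀) + (u + u₀)) := by
    rw [show (u - u₀) + (u + u₀) = 2 * u by ring]
    exact (isUnit_two_of_prime_pow hp2 hs).mul hu
  have hprod : (u - u₀) * (u + u₀) = 0 := by linear_combination h
  rcases isUnit_or_isUnit_of_isUnit_add hs hsum with h' | h'
  · exact Or.inr (eq_neg_of_add_eq_zero_left (h'.mul_right_eq_zero.mp hprod))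
  · exact Or.inl (sub_eq_zero.mp (h'.mul_left_eq_zero.mp hprod))

open Polynomial in
lemma _root_.PadicInt.exists_sq_add_eq_zero (hp2 : p ≠ 2) {m : ℤ} (hm : ¬ (p : ℤ) ∣ m)
    (hsq : IsSquare ((-m : ℤ) : ZMod p)) : ∃ a : ℤ_[p], a ^ 2 + m = 0 := by
  obtain ⟨r, hr⟩ := hsq
  obtain ⟨b, rfl⟩ := intCast_surjective r
  have hroot : (p : ℤ) ∣ b ^ 2 + m := by
    rw [← intCast_zmod_eq_zero_iff_dvd]
    push_cast at hr ⊢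
    linear_combination -hr
  have hsimple : ¬ (p : ℤ) ∣ 2 * b := by
    intro h
    rcases (Nat.prime_iff_prime_int.mp hp.out).dvd_or_dvd h with h | h
    · exact hp.out.not_intCast_dvd_two hp2 h
    · exact hm ((dvd_add_right (dvd_pow h two_ne_zero)).mp hroot)
  obtain ⟨a, ha, -⟩ := hensels_lemma (F := (X ^ 2 + C m : ℤ[X])) (a := (b : ℤ_[p])) (by
    have h1 : ‖((b ^ 2 + m : ℤ) : ℤ_[p])‖ < 1 := (PadicInt.norm_int_lt_one_iff_dvd _).mpr hroot
    have h2 : ‖((2 * b : ℤ) : ℤ_[p])‖ = 1 := le_antisymm (PadicInt.norm_le_one _)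
      (not_lt.mp (mt (PadicInt.norm_int_lt_one_iff_dvd _).mp hsimple))
    push_cast at h1
    rw [Int.cast_mul, norm_mul, Int.cast_ofNat] at h2
    simpa [map_ofNat, h2] using h1)
  exact ⟨a, by simpa using ha⟩

lemma card_sq_eq_sq_of_isUnit (hp2 : p ≠ 2) (hs : s ≠ 0) {u₀ : ZMod (p ^ s)} (hu₀ : IsUnit u₀) :
    Nat.card {u : ZMod (p ^ s) // u ^ 2 = u₀ ^ 2} = 2 := by
  have hne : u₀ ≠ -u₀ := by
    intro h
    have h0 : IsUnit ((0 : ℤ) : ZMod (p ^ s)) := by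
      rw [Int.cast_zero, show (0 : ZMod (p ^ s)) = 2 * u₀ by linear_combination -h]
      exact (isUnit_two_of_prime_pow hp2 hs).mul hu₀
    exact (isUnit_intCast_prime_pow_iff hs 0).mp h0 (dvd_zero _)
  have hroots : {u : ZMod (p ^ s) | u ^ 2 = u₀ ^ 2} = {u₀, -u₀} := by
    ext u
    simp only [Set.mem_ofPred_eq, Set.mem_insert_iff, Set.mem_singleton_iff]
    refine ⟨eq_or_eq_neg_of_sq_eq_sq hp2 hs hu₀, ?_⟩
    rintro (rfl | rfl) <;> ring
  calc Nat.card {u : ZMod (p ^ s) // u ^ 2 = u₀ ^ 2}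
      = Nat.card ({u₀, -u₀} : Set (ZMod (p ^ s))) := by rw [← hroots]; rfl
    _ = 2 := by rw [Nat.card_coe_set_eq, Set.ncard_pair hne]

lemma card_sq_add_eq_zero (hp2 : p ≠ 2) {m : ℤ} (hm : ¬ (p : ℤ) ∣ m) (hs : s ≠ 0) :
    (Nat.card {u : ZMod (p ^ s) // u ^ 2 + m = 0} : ℤ) = 1 + legendreSym p (-m) := by
  have hmp : ((-m : ℤ) : ZMod p) ≠ 0 := by
    rwa [Ne, intCast_zmod_eq_zero_iff_dvd, dvd_neg]
  rcases legendreSym.eq_one_or_neg_one p hmp with hχ | hχ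
  · obtain ⟨a, ha⟩ :=
      PadicInt.exists_sq_add_eq_zero hp2 hm ((legendreSym.eq_one_iff p hmp).mp hχ)
    set u₀ := PadicInt.toZModPow s a
    have hu₀ : u₀ ^ 2 = -m := by
      simpa [u₀, eq_neg_iff_add_eq_zero] using congrArg (PadicInt.toZModPow s) ha
    have hunit : IsUnit u₀ := by
      rw [← isUnit_pow_iff two_ne_zero, hu₀, ← Int.cast_neg, isUnit_intCast_prime_pow_iff hs,
        dvd_neg]
      exact hm
    have hcard : Nat.card {u : ZMod (p ^ s) // u ^ 2 + m = 0} = 2 :=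
      (Nat.card_congr (Equiv.subtypeEquivRight fun u => by rw [hu₀, eq_neg_iff_add_eq_zero])).trans
        (card_sq_eq_sq_of_isUnit hp2 hs hunit)
    rw [hχ, hcard]
    norm_num
  · have : IsEmpty {u : ZMod (p ^ s) // u ^ 2 + m = 0} := by
      refine ⟨fun ⟨u, hu⟩ => (legendreSym.eq_neg_one_iff p).mp hχ
        ⟨castHom (dvd_pow_self p hs) (ZMod p) u, ?_⟩⟩
      have := congrArg (castHom (dvd_pow_self p hs) (ZMod p)) hu
      simp only [map_add, map_pow, map_intCast, map_zero] at this
      push_cast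
      linear_combination -this
    rw [hχ, Nat.card_of_isEmpty]
    norm_num

lemma card_sq_add_mul_pow_eq_zero (hp2 : p ≠ 2) {m : ℤ} (hm : ¬ (p : ℤ) ∣ m) {k t : ℕ}
    (hkt : 2 * k < t) :
    (Nat.card {x : ZMod (p ^ t) // x ^ 2 + m * (p : ZMod (p ^ t)) ^ (2 * k) = 0} : ℤ) =
      p ^ k * (1 + legendreSym p (-m)) := by
  obtain ⟨s, rfl⟩ : ∃ s, t = 2 * k + s := ⟨t - 2 * k, by omega⟩
  have hN : p ^ (2 * k) * p ^ s = p ^ (2 * k + s) := (pow_add _ _ _).symm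
  set root : ZMod (p ^ (2 * k + s)) → Prop :=
    fun x => x ^ 2 + m * (p : ZMod (p ^ (2 * k + s))) ^ (2 * k) = 0
  have hscale := card_natCast_mul_comp (d := p ^ k) (n := p ^ (k + s)) (by ring) root
  have hdvd : ∀ x, ((p ^ k : ℕ) : ZMod (p ^ (2 * k + s))) ∣ x ∧ root x ↔ root x := fun x =>
    and_iff_right_of_imp fun h => by exact_mod_cast pow_dvd_of_sq_add_mul_pow_eq_zero (by omega) h
  have hreduce : ∀ y, root ((p ^ k : ℕ) * y) ↔
      castHom (Dvd.intro_left _ hN) (ZMod (p ^ s)) y ^ 2 + m = 0 := by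
    intro y
    rw [← map_pow, ← map_intCast (castHom (Dvd.intro_left _ hN) (ZMod (p ^ s))), ← map_add,
      ← natCast_mul_eq_zero_iff hN]
    simp only [root]
    push_cast
    constructor <;> intro h <;> linear_combination h
  simp only [hdvd] at hscale
  rw [Nat.card_congr (Equiv.subtypeEquivRight hreduce),
    card_castHom_comp hN (fun u => u ^ 2 + m = 0)] at hscale
  apply mul_left_cancel₀ (pow_ne_zero k (by exact_mod_cast hp.out.ne_zero : (p : ℤ) ≠ 0))
  have hscale' := congrArg (Nat.cast : ℕ → ℤ) hscale
  push_cast at hscale'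
  rw [← hscale', card_sq_add_eq_zero hp2 hm (by omega)]
  ring

lemma sq_add_mul_pow_ne_zero {m : ℤ} (hm : ¬ (p : ℤ) ∣ m) {k t : ℕ} (hkt : 2 * k + 2 ≤ t)
    (x : ZMod (p ^ t)) : x ^ 2 + m * (p : ZMod (p ^ t)) ^ (2 * k + 1) ≠ 0 := by
  intro h
  obtain ⟨y, rfl⟩ := pow_dvd_of_sq_add_mul_pow_eq_zero (k := k) (c := m * p) (x := x) (by omega)
    (by push_cast; linear_combination h)
  obtain ⟨Y, rfl⟩ := intCast_surjective y
  have hY : ((p ^ t : ℕ) : ℤ) ∣ (p : ℤ) ^ (2 * k) * (Y ^ 2 + m * p) := by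
    rw [← intCast_zmod_eq_zero_iff_dvd]
    push_cast
    linear_combination h
  push_cast at hY
  have hdvd : (p : ℤ) ^ (2 * k) * p ^ 2 ∣ (p : ℤ) ^ (2 * k) * (Y ^ 2 + m * p) := by
    rw [← pow_add]
    exact (pow_dvd_pow _ hkt).trans hY
  have hpk : (p : ℤ) ^ (2 * k) ≠ 0 := pow_ne_zero _ (by exact_mod_cast hp.out.ne_zero)
  exact Int.not_sq_dvd_sq_add_mul (Nat.prime_iff_prime_int.mp hp.out) hm Y
    ((mul_dvd_mul_iff_left hpk).mp hdvd)

end PrimePower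

end ZMod

lemma card_neg_sq_sub_pow_mul_mul_eq_sum {N : ℕ} [NeZero N] (q : ℕ) {v j : ℕ} (hjv : j ≤ v)
    (m : ℤ) :
    Nat.card {w : ZMod N × ZMod N × ZMod N //
        -w.1 ^ 2 - (q : ZMod N) ^ v * w.2.1 * w.2.2 = m * (q : ZMod N) ^ j} =
      ∑ yz : ZMod N × ZMod N, Nat.card {x : ZMod N //
        x ^ 2 + ((m + q ^ (v - j) * (yz.1.val * yz.2.val) : ℤ) : ZMod N) * (q : ZMod N) ^ j = 0} := by
  have e : {w : ZMod N × ZMod N × ZMod N //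
        -w.1 ^ 2 - (q : ZMod N) ^ v * w.2.1 * w.2.2 = m * (q : ZMod N) ^ j} ≃
      Σ yz : ZMod N × ZMod N,
        {x : ZMod N // -x ^ 2 - (q : ZMod N) ^ v * yz.1 * yz.2 = m * (q : ZMod N) ^ j} :=
    ⟨fun w => ⟨w.1.2, w.1.1, w.2⟩, fun s => ⟨(s.2.1, s.1), s.2.2⟩, fun _ => rfl, fun _ => rfl⟩
  rw [Nat.card_congr e, Nat.card_sigma]
  refine Finset.sum_congr rfl fun yz _ => Nat.card_congr (Equiv.subtypeEquivRight fun x => ?_)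
  have hq : (q : ZMod N) ^ v = q ^ (v - j) * q ^ j := by rw [← pow_add, Nat.sub_add_cancel hjv]
  push_cast
  simp only [ZMod.natCast_val, ZMod.cast_id', id, hq]
  constructor <;> intro h <;> linear_combination -h

section Density

variable {p : ℕ} [Fact p.Prime]

lemma legendreSym_neg_add_pow_mul (m : ℤ) {e : ℕ} (he : e ≠ 0) (c : ℤ) :
    legendreSym p (-(m + p ^ e * c)) = legendreSym p (-m) := by
  simp only [legendreSym]
  congr 1
  push_cast
  simp [zero_pow he]

lemma card_neg_sq_sub_pow_mul_mul_eq_even (hp2 : p ≠ 2) {m : ℤ} (hm : ¬ (p : ℤ) ∣ m)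
    {v k t : ℕ} (hkv : 2 * k < v) (hvt : v ≤ t) :
    (Nat.card {w : ZMod (p ^ t) × ZMod (p ^ t) × ZMod (p ^ t) //
        -w.1 ^ 2 - (p : ZMod (p ^ t)) ^ v * w.2.1 * w.2.2
          = (m : ZMod (p ^ t)) * (p : ZMod (p ^ t)) ^ (2 * k)} : ℤ) =
      p ^ (2 * t) * (p ^ k * (1 + legendreSym p (-m))) := by
  have he : v - 2 * k ≠ 0 := by omega
  rw [card_neg_sq_sub_pow_mul_mul_eq_sum p hkv.le, Nat.cast_sum,
    Finset.sum_congr rfl fun yz _ => by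
      rw [ZMod.card_sq_add_mul_pow_eq_zero hp2 (Int.not_dvd_add_pow_mul hm he _) (by omega),
        legendreSym_neg_add_pow_mul m he],
    Finset.sum_const, Finset.card_univ, Fintype.card_prod, ZMod.card, nsmul_eq_mul]
  push_cast
  ring

lemma card_neg_sq_sub_pow_mul_mul_eq_odd {m : ℤ} (hm : ¬ (p : ℤ) ∣ m)
    {v k t : ℕ} (hkv : 2 * k + 1 < v) (hvt : v ≤ t) :
    Nat.card {w : ZMod (p ^ t) × ZMod (p ^ t) × ZMod (p ^ t) //
        -w.1 ^ 2 - (p : ZMod (p ^ t)) ^ v * w.2.1 * w.2.2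
          = (m : ZMod (p ^ t)) * (p : ZMod (p ^ t)) ^ (2 * k + 1)} = 0 := by
  have he : v - (2 * k + 1) ≠ 0 := by omega
  rw [card_neg_sq_sub_pow_mul_mul_eq_sum p hkv.le]
  refine Finset.sum_eq_zero fun yz _ => Nat.card_eq_zero.mpr (Or.inl ⟨fun x => ?_⟩)
  exact ZMod.sq_add_mul_pow_ne_zero (k := k) (Int.not_dvd_add_pow_mul hm he _) (by omega) x.1 x.2

end Density

theorem localDensity_isotropic_low_valuation_general (p : ℕ) [Fact p.Prime] (hp2 : p ≠ 2)
    (v : ℕ) (m : ℤ) (hm : ¬ (p : ℤ) ∣ m) :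
    (∀ k : ℕ, 2 * k < v →
      ∃ T : ℕ, ∀ t ≥ T,
        (Nat.card {w : ZMod (p ^ t) × ZMod (p ^ t) × ZMod (p ^ t) //
            -w.1 ^ 2 - (p : ZMod (p ^ t)) ^ v * w.2.1 * w.2.2
              = (m : ZMod (p ^ t)) * (p : ZMod (p ^ t)) ^ (2 * k)} : ℚ)
            / (p : ℚ) ^ (2 * t)
          = (p : ℚ) ^ k * (1 + (legendreSym p (-m) : ℚ))) ∧
    (∀ k : ℕ, 2 * k + 1 < v →
      ∃ T : ℕ, ∀ t ≥ T,
        (Nat.card {w : ZMod (p ^ t) × ZMod (p ^ t) × ZMod (p ^ t) //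
            -w.1 ^ 2 - (p : ZMod (p ^ t)) ^ v * w.2.1 * w.2.2
              = (m : ZMod (p ^ t)) * (p : ZMod (p ^ t)) ^ (2 * k + 1)} : ℚ)
            / (p : ℚ) ^ (2 * t)
          = 0) := by
  have hp0 : (p : ℚ) ≠ 0 := by exact_mod_cast (Fact.out : p.Prime).ne_zero
  refine ⟨fun k hk => ⟨v, fun t ht => ?_⟩, fun k hk => ⟨v, fun t ht => ?_⟩⟩
  · have hcard := card_neg_sq_sub_pow_mul_mul_eq_even hp2 hm hk ht
    qify at hcard
    rw [hcard]
    field_simp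
  · rw [card_neg_sq_sub_pow_mul_mul_eq_odd hm hk ht, Nat.cast_zero, zero_div]

/-- Let `p` be an odd prime, `v` a nonnegative even integer, and `m` with `p ∤ m`.
For `2k < v`, the local density of `−x² − p^v·y·z` at `m·p^(2k)` equals
`p^k·(1 + (−m/p))`, and at `m·p^(2k+1)` with `2k+1 < v` it equals `0`. -/
theorem localDensity_isotropic_low_valuation (p : ℕ) [Fact p.Prime] (hp2 : p ≠ 2)
    (v : ℕ) (hv : Even v) (m : ℤ) (hm : ¬ (p : ℤ) ∣ m) :
    (∀ k : ℕ, 2 * k < v →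
      ∃ T : ℕ, ∀ t ≥ T,
        (Nat.card {w : ZMod (p ^ t) × ZMod (p ^ t) × ZMod (p ^ t) //
            -w.1 ^ 2 - (p : ZMod (p ^ t)) ^ v * w.2.1 * w.2.2
              = (m : ZMod (p ^ t)) * (p : ZMod (p ^ t)) ^ (2 * k)} : ℚ)
            / (p : ℚ) ^ (2 * t)
          = (p : ℚ) ^ k * (1 + (legendreSym p (-m) : ℚ))) ∧
    (∀ k : ℕ, 2 * k + 1 < v →
      ∃ T : ℕ, ∀ t ≥ T,
        (Nat.card {w : ZMod (p ^ t) × ZMod (p ^ t) × ZMod (p ^ t) //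
            -w.1 ^ 2 - (p : ZMod (p ^ t)) ^ v * w.2.1 * w.2.2
              = (m : ZMod (p ^ t)) * (p : ZMod (p ^ t)) ^ (2 * k + 1)} : ℚ)
            / (p : ℚ) ^ (2 * t)
          = 0) :=
  localDensity_isotropic_low_valuation_general p hp2 v m hm
end

section
/- Let p be an odd prime. For every sufficiently large t, (1/p^{2t}) times the number of triples (x,y,z) modulo p^t with −x² − p·y·z ≡ p·m (mod p^t), where p ∤ m, equals 1 − 1/p. -/
/-!
Let `t ≥ 2`. Since `p ∣ x²` forces `p ∣ x`, the solutions have `x = p a`, and then the equation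
divided by `p` reads `y z ≡ u (mod p^(t-1))` with `u = -(m + p a²)`. As `p ∤ m`, `u` is a unit,
so `(y, z) mod p^(t-1)` ranges over the `φ(p^(t-1))` pairs `(y, u y⁻¹)`, and each such pair lifts
to `p²` pairs mod `p^t`. With `p^(t-1)` choices of `x` this gives
`p^(t-1) · p² · φ(p^(t-1)) = p^(2t) (1 - 1/p)` solutions.
-/

open Finset

theorem AddMonoidHom.card_filter_mem_mul_card_of_surjective {G H : Type*} [AddGroup G]
    [Fintype G] [AddGroup H] [Fintype H] [DecidableEq H] (f : G →+ H) (hf : Function.Surjective f)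
    (T : Finset H) :
    #{g | f g ∈ T} * Fintype.card H = Fintype.card G * #T := by
  have hpre (T : Finset H) : #{g | f g ∈ T} = #T * #{g | f g = 0} := by
    rw [card_eq_sum_card_fiberwise (f := f) (s := {g | f g ∈ T}) (t := T)
      (fun g hg => (mem_filter.mp hg).2), ← smul_eq_mul, ← sum_const]
    refine sum_congr rfl fun h hh => ?_
    rw [filter_filter, ← AddMonoidHom.card_fiber_eq_of_mem_range f (hf h) (hf 0)]
    congr 1
    ext g
    simp only [mem_filter, mem_univ, true_and, and_iff_right_iff_imp]
    rintro rfl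
    exact hh
  have huniv := hpre univ
  simp only [mem_univ, filter_true, card_univ] at huniv
  rw [hpre, huniv]
  ring

theorem card_filter_mul_eq_unit {M : Type*} [CommMonoid M] [Fintype M] [DecidableEq M] (u : Mˣ) :
    #{v : M × M | v.1 * v.2 = u} = Fintype.card Mˣ := by
  rw [← Fintype.card_subtype]
  refine Fintype.card_congr
    { toFun := fun v => (isUnit_of_mul_isUnit_left (v.2.symm ▸ u.isUnit)).unit
      invFun := fun w => ⟨(w, ↑(w⁻¹ * u)), by simp⟩
      left_inv := ?_
      right_inv := fun w => by ext; simp }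
  rintro ⟨⟨y, z⟩, h⟩
  ext
  · simp
  · change ↑(_⁻¹ * u) = z
    rw [Units.val_mul, Units.inv_mul_eq_iff_eq_mul, IsUnit.unit_spec]
    exact h.symm

theorem ZMod.natCast_mul_eq_zero_iff_s9 {n d : ℕ} (hd : d ≠ 0) (w : ZMod (n * d)) :
    (d : ZMod (n * d)) * w = 0 ↔ ZMod.castHom (dvd_mul_right n d) (ZMod n) w = 0 := by
  rw [← ZMod.intCast_zmod_cast w, map_intCast, ← Int.cast_natCast, ← Int.cast_mul,
    ZMod.intCast_zmod_eq_zero_iff_dvd, ZMod.intCast_zmod_eq_zero_iff_dvd, Nat.cast_mul,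
    mul_comm (n : ℤ), Int.mul_dvd_mul_iff_left (by exact_mod_cast hd)]

theorem ZMod.isUnit_intCast_add_natCast_mul {p k : ℕ} (hp : p.Prime) {m : ℤ}
    (hm : ¬ (p : ℤ) ∣ m) (b : ZMod (p ^ k)) : IsUnit ((m : ZMod (p ^ k)) + p * b) := by
  have hnil : IsNilpotent (p : ZMod (p ^ k)) := ⟨k, by exact_mod_cast ZMod.natCast_self (p ^ k)⟩
  refine ((Commute.all _ b).isNilpotent_mul_right hnil).isUnit_add_left_of_commute ?_
    (Commute.all _ _)
  rw [ZMod.coe_int_isUnit_iff_isCoprime, Nat.cast_pow]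
  exact ((Nat.prime_iff_prime_int.mp hp).coprime_iff_not_dvd.mpr hm).pow_left

theorem ZMod.exists_eq_natCast_mul_of_castHom_eq_zero {n d : ℕ} (h : d ∣ n) {x : ZMod n}
    (hx : ZMod.castHom h (ZMod d) x = 0) : ∃ a : ZMod n, x = d * a := by
  rw [← ZMod.intCast_zmod_cast x, map_intCast, ZMod.intCast_zmod_eq_zero_iff_dvd] at hx
  obtain ⟨c, hc⟩ := hx
  exact ⟨c, by rw [← ZMod.intCast_zmod_cast x, hc]; push_cast; rfl⟩

section Solutions

variable {p : ℕ} [hp : Fact p.Prime]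

theorem card_yz_solutions_of_castHom_ne_zero (m : ℤ) {n : ℕ} [NeZero n] (h : p ∣ n)
    {x : ZMod n} (hx : ZMod.castHom h (ZMod p) x ≠ 0) :
    #{v : ZMod n × ZMod n | -x ^ 2 - p * v.1 * v.2 = p * m} = 0 := by
  refine card_eq_zero.mpr <| filter_eq_empty_iff.mpr fun v _ hv =>
    hx ((pow_eq_zero_iff two_ne_zero).mp ?_)
  have := congrArg (ZMod.castHom h (ZMod p)) hv
  simp only [map_sub, map_neg, map_pow, map_mul, map_natCast, ZMod.natCast_self] at this
  linear_combination -this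

theorem card_yz_solutions_of_eq_natCast_mul {m : ℤ} (hm : ¬ (p : ℤ) ∣ m) (k : ℕ)
    (a : ZMod (p ^ (k + 2))) :
    #{v : ZMod (p ^ (k + 2)) × ZMod (p ^ (k + 2)) | -(p * a) ^ 2 - p * v.1 * v.2 = p * m}
      = p ^ 2 * Nat.totient (p ^ (k + 1)) := by
  have hdvd : p ^ (k + 1) ∣ p ^ (k + 2) := pow_dvd_pow p (by omega)
  set π := ZMod.castHom hdvd (ZMod (p ^ (k + 1)))
  set u := -((m : ZMod (p ^ (k + 1))) + p * π a ^ 2)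
  have hu : IsUnit u := (ZMod.isUnit_intCast_add_natCast_mul hp.out hm _).neg
  have hiff (v : ZMod (p ^ (k + 2)) × ZMod (p ^ (k + 2))) :
      -(p * a) ^ 2 - p * v.1 * v.2 = p * m ↔ π v.1 * π v.2 = u := by
    have hfactor : -(p * a) ^ 2 - p * v.1 * v.2 = p * m ↔
        (p : ZMod (p ^ (k + 2))) * (v.1 * v.2 + m + p * a ^ 2) = 0 := by
      constructor <;> intro h <;> linear_combination -h
    refine hfactor.trans <|
      (ZMod.natCast_mul_eq_zero_iff_s9 (n := p ^ (k + 1)) hp.out.ne_zero _).trans ?_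
    change π _ = 0 ↔ _
    simp only [map_add, map_mul, map_pow, map_natCast, map_intCast, u]
    constructor <;> intro h <;> linear_combination h
  have hsurj : Function.Surjective (π.toAddMonoidHom.prodMap π.toAddMonoidHom) :=
    Function.Surjective.prodMap (ZMod.castHom_surjective hdvd) (ZMod.castHom_surjective hdvd)
  have hcount :=
    (π.toAddMonoidHom.prodMap π.toAddMonoidHom).card_filter_mem_mul_card_of_surjective
      hsurj {v | v.1 * v.2 = u}
  have hunits := card_filter_mul_eq_unit hu.unit
  rw [hu.unit_spec] at hunits
  simp only [AddMonoidHom.coe_prodMap, Prod.map_fst, Prod.map_snd, mem_filter, mem_univ, true_and,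
    RingHom.toAddMonoidHom_eq_coe, AddMonoidHom.coe_coe] at hcount
  rw [hunits, ZMod.card_units_eq_totient, Fintype.card_prod, Fintype.card_prod,
    ZMod.card, ZMod.card, ← filter_congr fun v _ => hiff v] at hcount
  apply Nat.eq_of_mul_eq_mul_right (pow_pos (pow_pos hp.out.pos (k + 1)) 2)
  rw [sq (p ^ (k + 1)), hcount]
  ring

theorem card_xyz_solutions {m : ℤ} (hm : ¬ (p : ℤ) ∣ m) (k : ℕ) :
    Nat.card {w : ZMod (p ^ (k + 2)) × ZMod (p ^ (k + 2)) × ZMod (p ^ (k + 2)) //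
        -w.1 ^ 2 - (p : ZMod (p ^ (k + 2))) * w.2.1 * w.2.2 = p * m}
      = p ^ (k + 1) * (p ^ 2 * Nat.totient (p ^ (k + 1))) := by
  have hdvd : p ∣ p ^ (k + 2) := dvd_pow_self p (by omega)
  set π := ZMod.castHom hdvd (ZMod p)
  have hfiber (x : ZMod (p ^ (k + 2))) :
      #{v : ZMod (p ^ (k + 2)) × ZMod (p ^ (k + 2)) | -x ^ 2 - p * v.1 * v.2 = p * m}
        = if π x = 0 then p ^ 2 * Nat.totient (p ^ (k + 1)) else 0 := by
    split_ifs with hx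
    · obtain ⟨a, rfl⟩ := ZMod.exists_eq_natCast_mul_of_castHom_eq_zero hdvd hx
      exact card_yz_solutions_of_eq_natCast_mul hm k a
    · exact card_yz_solutions_of_castHom_ne_zero m hdvd hx
  have hker : #{x | π x = 0} = p ^ (k + 1) := by
    have := π.toAddMonoidHom.card_filter_mem_mul_card_of_surjective
      (ZMod.castHom_surjective hdvd) {0}
    simp only [mem_singleton, ZMod.card, card_singleton, RingHom.toAddMonoidHom_eq_coe,
      AddMonoidHom.coe_coe, mul_one] at this
    exact Nat.eq_of_mul_eq_mul_right hp.out.pos (this.trans (pow_succ p (k + 1)))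
  calc _ = ∑ x, #{v : ZMod (p ^ (k + 2)) × ZMod (p ^ (k + 2)) |
              -x ^ 2 - p * v.1 * v.2 = p * m} := by
        rw [Nat.card_eq_fintype_card, Fintype.card_subtype, card_filter, Fintype.sum_prod_type]
        simp only [card_filter]
    _ = ∑ x, if π x = 0 then p ^ 2 * Nat.totient (p ^ (k + 1)) else 0 :=
        sum_congr rfl fun x _ => hfiber x
    _ = _ := by rw [← sum_filter, sum_const, smul_eq_mul, hker]

end Solutions

theorem localDensity_isotropic_p_at_pm_general (p : ℕ) [Fact p.Prime]
    (m : ℤ) (hm : ¬ (p : ℤ) ∣ m) :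
    ∃ T : ℕ, ∀ t ≥ T,
      (Nat.card {w : ZMod (p ^ t) × ZMod (p ^ t) × ZMod (p ^ t) //
          -w.1 ^ 2 - (p : ZMod (p ^ t)) * w.2.1 * w.2.2
            = (p : ZMod (p ^ t)) * (m : ZMod (p ^ t))} : ℚ)
          / (p : ℚ) ^ (2 * t)
        = 1 - 1 / p := by
  have hp : p.Prime := Fact.out
  refine ⟨2, fun t ht => ?_⟩
  obtain ⟨k, rfl⟩ : ∃ k, t = k + 2 := ⟨t - 2, by omega⟩
  rw [card_xyz_solutions hm k, Nat.totient_prime_pow hp k.succ_pos]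
  have hp0 : (p : ℚ) ≠ 0 := by exact_mod_cast hp.ne_zero
  push_cast [Nat.cast_sub hp.one_le]
  field_simp
  ring

/-- Let `p` be an odd prime and `m` with `p ∤ m`. For every sufficiently large `t`,
`(1/p^(2t))` times the number of triples `(x,y,z)` modulo `p^t` with
`−x² − p·y·z ≡ p·m (mod p^t)` equals `1 − 1/p`. -/
theorem localDensity_isotropic_p_at_pm (p : ℕ) [Fact p.Prime] (hp2 : p ≠ 2)
    (m : ℤ) (hm : ¬ (p : ℤ) ∣ m) :
    ∃ T : ℕ, ∀ t ≥ T,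
      (Nat.card {w : ZMod (p ^ t) × ZMod (p ^ t) × ZMod (p ^ t) //
          -w.1 ^ 2 - (p : ZMod (p ^ t)) * w.2.1 * w.2.2
            = (p : ZMod (p ^ t)) * (m : ZMod (p ^ t))} : ℚ)
          / (p : ℚ) ^ (2 * t)
        = 1 - 1 / p :=
  localDensity_isotropic_p_at_pm_general p m hm
end

section
/- Let p be an odd prime and m with p ∤ m. The local density of −x² − p·y·z at m equals 1 + (−m/p), where (−m/p) is the Legendre symbol. -/
/-!
For fixed `y, z` the equation reads `x² = -m - p y z`, a unit congruent to `-m` modulo `p`.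
Such a unit has exactly `1 + (-m/p)` square roots modulo `p^t`: none when `-m` is not a square
mod `p`; otherwise Hensel's lemma in `ℤ_[p]` supplies a root `r`, and any other root `x` satisfies
`(x - r)(x + r) = 0` in the local ring `ZMod (p^t)`, where the two factors differ by the unit `2r`,
so one of them is a unit and `x = ±r`. Summing over the `p^(2t)` pairs `(y, z)` gives the density.
-/

open Polynomial IsLocalRing PadicInt

theorem IsLocalRing.sq_eq_sq_iff_eq_or_eq_neg {R : Type*} [CommRing R] [IsLocalRing R]
    {r : R} (hr : IsUnit (2 * r)) (x : R) : x ^ 2 = r ^ 2 ↔ x = r ∨ x = -r := by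
  refine ⟨fun h => ?_, by rintro (rfl | rfl) <;> ring⟩
  have hprod : (x - r) * (x + r) = 0 := by linear_combination h
  by_cases hsub : IsUnit (x - r)
  · exact Or.inr (eq_neg_of_add_eq_zero_left (hsub.mul_right_eq_zero.mp hprod))
  by_cases hadd : IsUnit (x + r)
  · exact Or.inl (sub_eq_zero.mp (hadd.mul_left_eq_zero.mp hprod))
  have : 2 * r ∈ maximalIdeal R := by
    rw [show 2 * r = (x + r) - (x - r) by ring]
    exact sub_mem ((mem_maximalIdeal _).mpr hadd) ((mem_maximalIdeal _).mpr hsub)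
  exact absurd hr ((mem_maximalIdeal _).mp this)

theorem IsLocalRing.card_sq_eq_sq {R : Type*} [CommRing R] [IsLocalRing R]
    {r : R} (hr : IsUnit (2 * r)) : Nat.card {x : R // x ^ 2 = r ^ 2} = 2 := by
  have hne : r ≠ -r := fun h => hr.ne_zero (by linear_combination h)
  calc Nat.card {x : R // x ^ 2 = r ^ 2}
      = Nat.card ({r, -r} : Set R) :=
        Nat.card_congr (Equiv.subtypeEquivRight (sq_eq_sq_iff_eq_or_eq_neg hr))
    _ = 2 := by rw [Nat.card_coe_set_eq, Set.ncard_pair hne]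

section

variable {p : ℕ} [Fact p.Prime]

namespace PadicInt

theorem isUnit_iff_toZMod_ne_zero {z : ℤ_[p]} : IsUnit z ↔ toZMod z ≠ 0 := by
  rw [Ne, ← RingHom.mem_ker, ker_toZMod, mem_maximalIdeal, mem_nonunits_iff, not_not]

theorem isUnit_two (hp2 : p ≠ 2) : IsUnit (2 : ℤ_[p]) := by
  rw [isUnit_iff_toZMod_ne_zero, map_ofNat]
  exact Ring.two_ne_zero (by rwa [ZMod.ringChar_zmod_n])

theorem isSquare_of_isSquare_toZMod (hp2 : p ≠ 2) {w : ℤ_[p]} (hw : toZMod w ≠ 0)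
    (hsq : IsSquare (toZMod w)) : IsSquare w := by
  obtain ⟨b, hb⟩ := hsq
  have hb0 : b ≠ 0 := by rintro rfl; simp_all
  have hroot : (X ^ 2 - C w).eval (b.val : ℤ_[p]) ∈ maximalIdeal ℤ_[p] := by
    rw [← ker_toZMod, RingHom.mem_ker]
    simp [hb, sq]
  have hderiv : IsUnit ((X ^ 2 - C w).derivative.eval (b.val : ℤ_[p])) := by
    have : (X ^ 2 - C w).derivative.eval (b.val : ℤ_[p]) = 2 * (b.val : ℤ_[p]) := by
      simp [one_add_one_eq_two]
    rw [this]
    exact (isUnit_two hp2).mul (isUnit_iff_toZMod_ne_zero.mpr (by simpa using hb0))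
  obtain ⟨z, hz, -⟩ := HenselianRing.is_henselian (X ^ 2 - C w)
    (monic_X_pow_sub_C w two_ne_zero) _ hroot (hderiv.map _)
  simp only [IsRoot, eval_sub, eval_pow, eval_X, eval_C] at hz
  exact ⟨z, by linear_combination -hz⟩

theorem toZModPow_surjective (n : ℕ) : Function.Surjective (toZModPow n : ℤ_[p] →+* _) :=
  fun x => ⟨(x.val : ℤ_[p]), by simp⟩

end PadicInt

namespace ZMod

theorem isLocalRing_prime_pow {t : ℕ} (ht : t ≠ 0) : IsLocalRing (ZMod (p ^ t)) :=
  haveI : Fact (1 < p ^ t) := ⟨Nat.one_lt_pow ht (Fact.out : p.Prime).one_lt⟩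
  .of_surjective' _ (toZModPow_surjective (p := p) t)

theorem card_sq_eq_intCast_add_natCast_mul (hp2 : p ≠ 2) {t : ℕ} (ht : t ≠ 0) {a : ℤ}
    (ha : ¬ (p : ℤ) ∣ a) (c : ZMod (p ^ t)) :
    (Nat.card {x : ZMod (p ^ t) // x ^ 2 = a + p * c} : ℤ) = 1 + legendreSym p a := by
  have ha0 : (a : ZMod p) ≠ 0 := by rwa [Ne, ZMod.intCast_zmod_eq_zero_iff_dvd]
  by_cases hsq : IsSquare (a : ZMod p)
  · obtain ⟨c', rfl⟩ := toZModPow_surjective t c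
    have hw : toZMod ((a : ℤ_[p]) + (p : ℤ_[p]) * c') = (a : ZMod p) := by simp
    obtain ⟨z, hz⟩ := isSquare_of_isSquare_toZMod hp2 (hw ▸ ha0) (hw ▸ hsq)
    have h2z : IsUnit (2 * z) := by
      refine (isUnit_two hp2).mul (isUnit_iff_toZMod_ne_zero.mpr fun hz0 => ha0 ?_)
      rw [← hw, hz, map_mul, hz0, zero_mul]
    have := isLocalRing_prime_pow (p := p) ht
    have h2r : IsUnit (2 * toZModPow t z) := by
      simpa only [map_mul, map_ofNat] using h2z.map (toZModPow t)
    have hr : toZModPow t z ^ 2 = a + p * toZModPow t c' := by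
      rw [sq, ← map_mul, ← hz, map_add, map_mul, map_intCast, map_natCast]
    rw [← hr, IsLocalRing.card_sq_eq_sq h2r, (legendreSym.eq_one_iff p ha0).mpr hsq]
    rfl
  · have : IsEmpty {x : ZMod (p ^ t) // x ^ 2 = a + p * c} := by
      refine ⟨fun ⟨x, hx⟩ => hsq ⟨ZMod.castHom (dvd_pow_self p ht) (ZMod p) x, ?_⟩⟩
      have := congrArg (ZMod.castHom (dvd_pow_self p ht) (ZMod p)) hx
      rw [map_pow, map_add, map_mul, map_intCast, map_natCast, ZMod.natCast_self, zero_mul,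
        add_zero] at this
      rw [← this, sq]
    rw [Nat.card_of_isEmpty, (legendreSym.eq_neg_one_iff p).mpr hsq]
    rfl

end ZMod

theorem card_neg_sq_sub_natCast_mul_mul_eq (hp2 : p ≠ 2) {t : ℕ} (ht : t ≠ 0) {m : ℤ}
    (hm : ¬ (p : ℤ) ∣ m) :
    (Nat.card {w : ZMod (p ^ t) × ZMod (p ^ t) × ZMod (p ^ t) //
        -w.1 ^ 2 - (p : ZMod (p ^ t)) * w.2.1 * w.2.2 = (m : ZMod (p ^ t))} : ℤ)
      = p ^ (2 * t) * (1 + legendreSym p (-m)) := by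
  let e : {w : ZMod (p ^ t) × ZMod (p ^ t) × ZMod (p ^ t) //
        -w.1 ^ 2 - (p : ZMod (p ^ t)) * w.2.1 * w.2.2 = (m : ZMod (p ^ t))} ≃
      Σ yz : ZMod (p ^ t) × ZMod (p ^ t),
        {x : ZMod (p ^ t) // x ^ 2 = ((-m : ℤ) : ZMod (p ^ t)) + p * -(yz.1 * yz.2)} :=
    { toFun := fun w => ⟨w.1.2, w.1.1, by push_cast; linear_combination -w.2⟩
      invFun := fun s =>
        ⟨(s.2, s.1), by linear_combination -s.2.2 - Int.cast_neg (R := ZMod (p ^ t)) m⟩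
      left_inv := fun _ => rfl
      right_inv := fun _ => rfl }
  rw [Nat.card_congr e, Nat.card_sigma, Nat.cast_sum]
  simp_rw [ZMod.card_sq_eq_intCast_add_natCast_mul hp2 ht (dvd_neg.not.mpr hm)]
  rw [Finset.sum_const, Finset.card_univ, Fintype.card_prod, ZMod.card, nsmul_eq_mul]
  push_cast
  ring

end

/-- Let `p` be an odd prime and `m` with `p ∤ m`. The local density of
`−x² − p·y·z` at `m` equals `1 + (−m/p)`. -/
theorem localDensity_isotropic_p_at_unit (p : ℕ) [Fact p.Prime] (hp2 : p ≠ 2)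
    (m : ℤ) (hm : ¬ (p : ℤ) ∣ m) :
    ∃ T : ℕ, ∀ t ≥ T,
      (Nat.card {w : ZMod (p ^ t) × ZMod (p ^ t) × ZMod (p ^ t) //
          -w.1 ^ 2 - (p : ZMod (p ^ t)) * w.2.1 * w.2.2 = (m : ZMod (p ^ t))} : ℚ)
          / (p : ℚ) ^ (2 * t)
        = 1 + (legendreSym p (-m) : ℚ) := by
  refine ⟨1, fun t ht => ?_⟩
  have hcard := card_neg_sq_sub_natCast_mul_mul_eq hp2 (Nat.one_le_iff_ne_zero.mp ht) hm
  have hp0 : (p : ℚ) ≠ 0 := Nat.cast_ne_zero.mpr (Fact.out : p.Prime).ne_zero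
  rw [div_eq_iff (pow_ne_zero _ hp0)]
  exact_mod_cast hcard.trans (mul_comm _ _)
end

section
/- Let u be a nonnegative integer. Then for all positive integers n, the local density at 2 of the form 3x² − 2^{2u+3}(y² + z² + yz) at 4n equals twice the local density at 2 of 3x² − 2^{2u+1}(y² + z² + yz) at n. -/
/-!
Write `Q = y² + z² + yz` and `N_k(n, t)` for the number of solutions of `3x² - 2^k Q ≡ n (mod 2^t)`
in `{0, …, 2^t - 1}³`. A solution of the `k + 2` form at `4n` modulo `2^(t+2)` has `x` even, and
`3(2x)² - 2^(k+2) Q = 4 (3x² - 2^k Q)`, so `N_{k+2}(4n, t + 2) = 32 N_k(n, t)`; normalised by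
`4^(t+2)` versus `4^t` this is the factor `32 / 16 = 2`.

What is left is that `N_k(n, t) / 4^t` is eventually constant for odd `k` and `n > 0`, by induction
on `n`. If `4 ∤ n`, every solution modulo `2^(t+1)` has an odd entry in half the gradient of the
form, and a Hensel-type lifting shows that the count quadruples from `2^(t+1)` to `2^(t+2)`. If
`n = 4m`, the identity above (for `k ≥ 3`) or `N_1(4m, t + 2) = 8 N_1(m, t)` (for `k = 1`: here
`Q` is odd unless `y` and `z` are both even) reduces to `m`.
-/

open Finset Filter

section BoxSums

variable {M : Type*} [AddCommMonoid M]

theorem sum_range_mul_eq_sum_sum (g : ℕ → M) (m q : ℕ) :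
    ∑ a ∈ range (m * q), g a = ∑ r ∈ range m, ∑ i ∈ range q, g (r + m * i) := by
  induction q with
  | zero => simp
  | succ q ih =>
    rw [mul_add_one, sum_range_add, ih, ← sum_add_distrib]
    exact sum_congr rfl fun r _ => by rw [sum_range_succ, add_comm (m * q) r]

theorem sum_range_mul_of_periodic {g : ℕ → M} {m : ℕ} (hg : Function.Periodic g m) (q : ℕ) :
    ∑ a ∈ range (m * q), g a = q • ∑ r ∈ range m, g r := by
  rw [sum_range_mul_eq_sum_sum, smul_sum]
  refine sum_congr rfl fun r _ => ?_
  have hr : ∀ i, g (r + m * i) = g r := fun i => by rw [mul_comm]; exact hg.nat_mul i r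
  simp only [hr, sum_const, card_range]

theorem sum_range_two_mul_of_odd {g : ℕ → M} (hg : ∀ a, Odd a → g a = 0) (m : ℕ) :
    ∑ a ∈ range (2 * m), g a = ∑ b ∈ range m, g (2 * b) := by
  rw [sum_range_mul_eq_sum_sum, sum_range_succ, sum_range_one]
  simp [add_comm 1, hg _ (odd_two_mul_add_one _)]

theorem sum_box_mul_eq (f : ℕ → ℕ → ℕ → M) (m q : ℕ) :
    ∑ x ∈ range (m * q), ∑ y ∈ range (m * q), ∑ z ∈ range (m * q), f x y z =
      ∑ x ∈ range m, ∑ y ∈ range m, ∑ z ∈ range m,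
        ∑ a ∈ range q, ∑ b ∈ range q, ∑ c ∈ range q, f (x + m * a) (y + m * b) (z + m * c) := by
  simp only [sum_range_mul_eq_sum_sum _ m q]
  refine sum_congr rfl fun x _ => ?_
  rw [sum_comm]
  refine sum_congr rfl fun y _ => ?_
  rw [sum_congr rfl fun a _ => sum_comm, sum_comm]

theorem sum_box_of_periodic {f : ℕ → ℕ → ℕ → M} {m : ℕ}
    (hx : ∀ y z, Function.Periodic (f · y z) m) (hy : ∀ x z, Function.Periodic (f x · z) m)
    (hz : ∀ x y, Function.Periodic (f x y) m) (q₁ q₂ q₃ : ℕ) :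
    ∑ x ∈ range (m * q₁), ∑ y ∈ range (m * q₂), ∑ z ∈ range (m * q₃), f x y z =
      (q₁ * q₂ * q₃) • ∑ x ∈ range m, ∑ y ∈ range m, ∑ z ∈ range m, f x y z := by
  have hyz : ∀ x, Function.Periodic (fun y => q₃ • ∑ z ∈ range m, f x y z) m := fun x y =>
    congrArg (q₃ • ·) (sum_congr rfl fun z _ => hy x z y)
  have hxyz : Function.Periodic
      (fun x => q₂ • ∑ y ∈ range m, q₃ • ∑ z ∈ range m, f x y z) m := fun x =>
    congrArg (q₂ • ·) (sum_congr rfl fun y _ =>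
      congrArg (q₃ • ·) (sum_congr rfl fun z _ => hx y z x))
  simp only [sum_range_mul_of_periodic (hz _ _)]
  simp only [sum_range_mul_of_periodic (hyz _)]
  rw [sum_range_mul_of_periodic hxyz]
  simp only [smul_sum, mul_smul]

theorem sum_box_two_mul_of_odd {f : ℕ → ℕ → ℕ → M}
    (hf : ∀ x y z, Odd x ∨ Odd y ∨ Odd z → f x y z = 0) (m : ℕ) :
    ∑ x ∈ range (2 * m), ∑ y ∈ range (2 * m), ∑ z ∈ range (2 * m), f x y z =
      ∑ x ∈ range m, ∑ y ∈ range m, ∑ z ∈ range m, f (2 * x) (2 * y) (2 * z) := by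
  rw [sum_range_two_mul_of_odd fun x hx =>
    sum_eq_zero fun y _ => sum_eq_zero fun z _ => hf x y z (.inl hx)]
  refine sum_congr rfl fun x _ => ?_
  rw [sum_range_two_mul_of_odd fun y hy => sum_eq_zero fun z _ => hf _ y z (.inr (.inl hy))]
  exact sum_congr rfl fun y _ =>
    sum_range_two_mul_of_odd (fun z hz => hf _ _ z (.inr (.inr hz))) m

end BoxSums

theorem sum_box_ite_modEq_two {α β γ : ℤ} (h : Odd α ∨ Odd β ∨ Odd γ) (θ : ℤ) :
    ∑ a ∈ range 4, ∑ b ∈ range 4, ∑ c ∈ range 4,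
      (if α * a + β * b + γ * c ≡ θ [ZMOD 2] then 1 else 0 : ℕ) = 32 := by
  have key : ∀ A B C Θ : ZMod 2, (A = 1 ∨ B = 1 ∨ C = 1) →
      ∑ a ∈ range 4, ∑ b ∈ range 4, ∑ c ∈ range 4,
        (if A * a + B * b + C * c = Θ then 1 else 0 : ℕ) = 32 := by
    decide
  have hcast : ∀ u v : ℤ, u ≡ v [ZMOD 2] ↔ (u : ZMod 2) = v := fun u v =>
    (ZMod.intCast_eq_intCast_iff u v 2).symm
  simp only [hcast]
  push_cast
  exact key _ _ _ _ (by simpa only [ZMod.intCast_eq_one_iff_odd] using h)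

def solCount (F : ℤ → ℤ → ℤ → ℤ) (n : ℤ) (t : ℕ) : ℕ :=
  ∑ x ∈ range (2 ^ t), ∑ y ∈ range (2 ^ t), ∑ z ∈ range (2 ^ t),
    if F x y z ≡ n [ZMOD 2 ^ t] then 1 else 0

theorem sum_box_ite_modEq_eq_mul_solCount {F : ℤ → ℤ → ℤ → ℤ} {t : ℕ}
    (hF : ∀ {x x' y y' z z' : ℤ}, x ≡ x' [ZMOD 2 ^ t] → y ≡ y' [ZMOD 2 ^ t] →
      z ≡ z' [ZMOD 2 ^ t] → F x y z ≡ F x' y' z' [ZMOD 2 ^ t]) (n : ℤ) (q₁ q₂ q₃ : ℕ) :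
    ∑ x ∈ range (2 ^ t * q₁), ∑ y ∈ range (2 ^ t * q₂), ∑ z ∈ range (2 ^ t * q₃),
        (if F x y z ≡ n [ZMOD 2 ^ t] then 1 else 0 : ℕ) = q₁ * q₂ * q₃ * solCount F n t := by
  have hshift : ∀ a : ℕ, ((a + 2 ^ t : ℕ) : ℤ) ≡ a [ZMOD 2 ^ t] := fun a => by
    push_cast; exact Int.add_modEq_right
  have hiff : ∀ {x x' y y' z z' : ℤ}, x ≡ x' [ZMOD 2 ^ t] → y ≡ y' [ZMOD 2 ^ t] →
      z ≡ z' [ZMOD 2 ^ t] → (F x y z ≡ n [ZMOD 2 ^ t] ↔ F x' y' z' ≡ n [ZMOD 2 ^ t]) :=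
    fun hx hy hz => ⟨(hF hx hy hz).symm.trans, (hF hx hy hz).trans⟩
  rw [sum_box_of_periodic (f := fun x y z : ℕ => if F x y z ≡ n [ZMOD 2 ^ t] then 1 else 0)
    (fun y z x => if_congr (hiff (hshift x) .rfl .rfl) rfl rfl)
    (fun x z y => if_congr (hiff .rfl (hshift y) .rfl) rfl rfl)
    (fun x y z => if_congr (hiff .rfl .rfl (hshift z)) rfl rfl), smul_eq_mul, solCount]

theorem sum_box_ite_lift_modEq {G : ℤ → ℤ → ℤ → ℤ} {F₀ α β γ n : ℤ} {t : ℕ}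
    (hG : ∀ a b c, G a b c ≡ F₀ + 2 ^ (t + 1) * (α * a + β * b + γ * c) [ZMOD 2 ^ (t + 2)])
    (hodd : F₀ ≡ n [ZMOD 2 ^ (t + 1)] → Odd α ∨ Odd β ∨ Odd γ) :
    ∑ a ∈ range 4, ∑ b ∈ range 4, ∑ c ∈ range 4,
        (if G a b c ≡ n [ZMOD 2 ^ (t + 2)] then 1 else 0 : ℕ) =
      if F₀ ≡ n [ZMOD 2 ^ (t + 1)] then 32 else 0 := by
  split_ifs with hF₀
  · obtain ⟨θ, hθ⟩ := hF₀.dvd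
    have hlin : ∀ a b c, G a b c ≡ n [ZMOD 2 ^ (t + 2)] ↔ α * a + β * b + γ * c ≡ θ [ZMOD 2] :=
      fun a b c => by
        have hn : n = F₀ + 2 ^ (t + 1) * θ := by linear_combination hθ
        rw [hn, pow_succ 2 (t + 1)]
        specialize hG a b c
        rw [pow_succ 2 (t + 1)] at hG
        exact ⟨fun h => (hG.symm.trans h).add_left_cancel' F₀ |>.mul_left_cancel' (by positivity),
          fun h => hG.trans ((h.mul_left' (c := 2 ^ (t + 1))).add_left F₀)⟩
    simp only [hlin]
    exact sum_box_ite_modEq_two (hodd hF₀) θ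
  · refine sum_eq_zero fun a _ => sum_eq_zero fun b _ => sum_eq_zero fun c _ =>
      if_neg fun h => hF₀ ?_
    exact Int.modEq_add_fac_self.symm.trans
      (((hG a b c).symm.trans h).of_dvd (pow_dvd_pow 2 (Nat.le_succ _)))

/-- At `p = 2` the gradient of `F` is even, so the `gᵢ` stand for half of it, and a step of size
`2^t` changes `F` modulo `2^(t+2)` by `2^(t+1)` times a linear form. -/
theorem solCount_add_two_eq_four_mul {F g₁ g₂ g₃ : ℤ → ℤ → ℤ → ℤ} {n : ℤ} {t : ℕ}
    (hexp : ∀ x y z a b c, F (x + 2 ^ t * a) (y + 2 ^ t * b) (z + 2 ^ t * c) ≡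
      F x y z + 2 ^ (t + 1) * (g₁ x y z * a + g₂ x y z * b + g₃ x y z * c) [ZMOD 2 ^ (t + 2)])
    (hodd : ∀ x y z, F x y z ≡ n [ZMOD 2 ^ (t + 1)] →
      Odd (g₁ x y z) ∨ Odd (g₂ x y z) ∨ Odd (g₃ x y z)) :
    solCount F n (t + 2) = 4 * solCount F n (t + 1) := by
  have hcoarse : ∀ x y z a b c, F (x + 2 ^ t * a) (y + 2 ^ t * b) (z + 2 ^ t * c) ≡ n
      [ZMOD 2 ^ (t + 1)] ↔ F x y z ≡ n [ZMOD 2 ^ (t + 1)] := fun x y z a b c => by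
    have h := ((hexp x y z a b c).of_dvd (pow_dvd_pow 2 (by omega))).trans Int.modEq_add_fac_self
    exact ⟨h.symm.trans, h.trans⟩
  rw [solCount, solCount, show (2 : ℕ) ^ (t + 2) = 2 ^ t * 4 by ring,
    show (2 : ℕ) ^ (t + 1) = 2 ^ t * 2 by ring, sum_box_mul_eq, sum_box_mul_eq]
  simp only [mul_sum]
  refine sum_congr rfl fun x _ => sum_congr rfl fun y _ => sum_congr rfl fun z _ => ?_
  push_cast
  rw [sum_box_ite_lift_modEq (hexp _ _ _) (hodd _ _ _)]
  simp only [hcoarse, sum_const, card_range]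
  split_ifs <;> rfl

def ternaryForm (k : ℕ) (x y z : ℤ) : ℤ := 3 * x ^ 2 - 2 ^ k * (y ^ 2 + z ^ 2 + y * z)

theorem ternaryForm_modEq (k : ℕ) {m x x' y y' z z' : ℤ} (hx : x ≡ x' [ZMOD m])
    (hy : y ≡ y' [ZMOD m]) (hz : z ≡ z' [ZMOD m]) :
    ternaryForm k x y z ≡ ternaryForm k x' y' z' [ZMOD m] :=
  ((hx.pow 2).mul_left 3).sub (((hy.pow 2).add (hz.pow 2)).add (hy.mul hz) |>.mul_left _)

theorem ternaryForm_add_two_two_mul (k : ℕ) (x y z : ℤ) :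
    ternaryForm (k + 2) (2 * x) y z = 4 * ternaryForm k x y z := by
  unfold ternaryForm; ring

theorem ternaryForm_two_mul (k : ℕ) (x y z : ℤ) :
    ternaryForm k (2 * x) (2 * y) (2 * z) = 4 * ternaryForm k x y z := by
  unfold ternaryForm; ring

theorem ternaryForm_add_two_pow_mul_modEq (j : ℕ) {t : ℕ} (ht : 2 ≤ t) (x y z a b c : ℤ) :
    ternaryForm (j + 1) (x + 2 ^ t * a) (y + 2 ^ t * b) (z + 2 ^ t * c) ≡
      ternaryForm (j + 1) x y z + 2 ^ (t + 1) *
        (3 * x * a + -(2 ^ j * (2 * y + z)) * b + -(2 ^ j * (y + 2 * z)) * c)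
      [ZMOD 2 ^ (t + 2)] := by
  obtain ⟨s, rfl⟩ := Nat.exists_eq_add_of_le' ht
  refine (Int.modEq_iff_dvd.2 ⟨2 ^ s * ternaryForm (j + 1) a b c, ?_⟩).symm
  unfold ternaryForm; ring

theorem even_ternaryForm_succ_iff {k : ℕ} {x y z : ℤ} :
    Even (ternaryForm (k + 1) x y z) ↔ Even x := by
  simp [ternaryForm, parity_simps, (by decide : ¬ Even (3 : ℤ))]

theorem even_of_four_dvd_ternaryForm_one {x y z : ℤ} (h : 4 ∣ ternaryForm 1 x y z) :
    Even x ∧ Even y ∧ Even z := by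
  obtain ⟨x, rfl⟩ :=
    (even_ternaryForm_succ_iff.1 (even_iff_two_dvd.2 (dvd_trans ⟨2, rfl⟩ h))).two_dvd
  have hQ : Even (y ^ 2 + z ^ 2 + y * z) := by
    refine even_iff_two_dvd.2 ((mul_dvd_mul_iff_left two_ne_zero).1 ?_)
    rw [show 2 * (y ^ 2 + z ^ 2 + y * z) = 4 * (3 * x ^ 2) - ternaryForm 1 (2 * x) y z by
      unfold ternaryForm; ring]
    exact dvd_sub (dvd_mul_right 4 _) h
  refine ⟨even_two_mul x, ?_⟩
  simp only [parity_simps] at hQ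
  tauto

theorem odd_halfGradient_of_not_four_dvd_ternaryForm (j : ℕ) {x y z : ℤ}
    (h : ¬ 4 ∣ ternaryForm (j + 1) x y z) :
    Odd (3 * x) ∨ Odd (-(2 ^ j * (2 * y + z))) ∨ Odd (-(2 ^ j * (y + 2 * z))) := by
  contrapose! h
  simp only [Int.not_odd_iff_even, parity_simps] at h
  obtain ⟨hx, hy, hz⟩ := h
  obtain ⟨x, rfl⟩ := (hx.resolve_left (by decide)).two_dvd
  cases j with
  | zero =>
    simp only [pow_zero, one_mul, neg_add_rev, Int.even_add, even_neg, even_two, Even.mul_right,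
      iff_true, true_iff] at hy hz
    obtain ⟨y, rfl⟩ := hz.two_dvd
    obtain ⟨z, rfl⟩ := hy.two_dvd
    exact ⟨_, ternaryForm_two_mul 1 x y z⟩
  | succ i => exact ⟨3 * x ^ 2 - 2 ^ i * (y ^ 2 + z ^ 2 + y * z), by unfold ternaryForm; ring⟩

theorem solCount_ternaryForm_add_two (k : ℕ) (n : ℤ) (t : ℕ) :
    solCount (ternaryForm (k + 2)) (4 * n) (t + 2) = 32 * solCount (ternaryForm k) n t := by
  have hodd : ∀ x y z : ℕ, Odd x →
      ¬ ternaryForm (k + 2) x y z ≡ 4 * n [ZMOD 2 ^ (t + 2)] := fun x y z hx h => by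
    have h2 : (2 : ℤ) ∣ ternaryForm (k + 2) x y z :=
      (h.of_dvd (pow_dvd_pow 2 (by omega) : (2 : ℤ) ^ 1 ∣ _)).dvd_iff.2 ⟨2 * n, by ring⟩
    exact Nat.not_even_iff_odd.2 hx
      ((Int.even_coe_nat x).1 (even_ternaryForm_succ_iff.1 (even_iff_two_dvd.2 h2)))
  have hhalve : ∀ x y z : ℤ, ternaryForm (k + 2) (2 * x) y z ≡ 4 * n [ZMOD 2 ^ (t + 2)] ↔
      ternaryForm k x y z ≡ n [ZMOD 2 ^ t] := fun x y z => by
    rw [ternaryForm_add_two_two_mul, pow_add, mul_comm]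
    exact Int.ModEq.mul_left_cancel_iff' four_ne_zero
  rw [solCount, show (2 : ℕ) ^ (t + 2) = 2 * 2 ^ (t + 1) by ring,
    sum_range_two_mul_of_odd fun x hx => sum_eq_zero fun y _ => sum_eq_zero fun z _ =>
      if_neg (hodd x y z hx)]
  push_cast
  simp only [hhalve]
  rw [show 2 * 2 ^ (t + 1) = 2 ^ t * 4 by ring, show (2 : ℕ) ^ (t + 1) = 2 ^ t * 2 by ring,
    sum_box_ite_modEq_eq_mul_solCount (ternaryForm_modEq k)]

theorem solCount_ternaryForm_one (n : ℤ) (t : ℕ) :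
    solCount (ternaryForm 1) (4 * n) (t + 2) = 8 * solCount (ternaryForm 1) n t := by
  have heven : ∀ x y z : ℕ, Odd x ∨ Odd y ∨ Odd z →
      (if ternaryForm 1 x y z ≡ 4 * n [ZMOD 2 ^ (t + 2)] then 1 else 0 : ℕ) = 0 := by
    intro x y z hodd
    refine if_neg fun h => ?_
    have h4 : (4 : ℤ) ∣ ternaryForm 1 x y z :=
      (h.of_dvd (pow_dvd_pow 2 (by omega) : (2 : ℤ) ^ 2 ∣ _)).dvd_iff.2 ⟨n, by ring⟩
    obtain ⟨hx, hy, hz⟩ := even_of_four_dvd_ternaryForm_one h4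
    simp only [← Nat.not_even_iff_odd, Int.even_coe_nat] at hodd hx hy hz
    tauto
  have hhalve : ∀ x y z : ℤ, ternaryForm 1 (2 * x) (2 * y) (2 * z) ≡ 4 * n [ZMOD 2 ^ (t + 2)] ↔
      ternaryForm 1 x y z ≡ n [ZMOD 2 ^ t] := fun x y z => by
    rw [ternaryForm_two_mul, pow_add, mul_comm]
    exact Int.ModEq.mul_left_cancel_iff' four_ne_zero
  rw [solCount, show (2 : ℕ) ^ (t + 2) = 2 * 2 ^ (t + 1) by ring, sum_box_two_mul_of_odd heven]
  push_cast
  simp only [hhalve]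
  rw [show (2 : ℕ) ^ (t + 1) = 2 ^ t * 2 by ring,
    sum_box_ite_modEq_eq_mul_solCount (ternaryForm_modEq 1)]

theorem eventually_solCount_ternaryForm_succ_of_not_four_dvd (j : ℕ) {n : ℤ} (hn : ¬ 4 ∣ n) :
    ∀ᶠ t in atTop,
      solCount (ternaryForm (j + 1)) n (t + 1) = 4 * solCount (ternaryForm (j + 1)) n t := by
  filter_upwards [eventually_ge_atTop 3] with t ht
  obtain ⟨s, rfl⟩ := Nat.exists_eq_add_of_le' ht
  refine solCount_add_two_eq_four_mul (t := s + 2)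
    (ternaryForm_add_two_pow_mul_modEq j (by omega)) fun x y z h =>
      odd_halfGradient_of_not_four_dvd_ternaryForm j fun h4 => hn ?_
  exact (h.of_dvd (pow_dvd_pow 2 (by omega) : (2 : ℤ) ^ 2 ∣ _)).dvd_iff.1 h4

theorem eventually_succ_eq_four_mul_of_add_two {a b : ℕ → ℕ} {c : ℕ}
    (hab : ∀ t, a (t + 2) = c * b t) (hb : ∀ᶠ t in atTop, b (t + 1) = 4 * b t) :
    ∀ᶠ t in atTop, a (t + 1) = 4 * a t := by
  obtain ⟨T, hT⟩ := eventually_atTop.1 hb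
  filter_upwards [eventually_ge_atTop (T + 2)] with t ht
  obtain ⟨s, rfl⟩ : ∃ s, t = s + 2 := ⟨t - 2, by omega⟩
  calc a (s + 2 + 1) = c * b (s + 1) := hab (s + 1)
    _ = 4 * (c * b s) := by rw [hT s (by omega)]; ring
    _ = 4 * a (s + 2) := by rw [hab s]

theorem eventually_solCount_ternaryForm_succ (u n : ℕ) (hn : 0 < n) :
    ∀ᶠ t in atTop, solCount (ternaryForm (2 * u + 1)) n (t + 1) =
      4 * solCount (ternaryForm (2 * u + 1)) n t := by
  induction n using Nat.strong_induction_on generalizing u with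
  | _ n ih =>
  by_cases h4 : 4 ∣ n
  · obtain ⟨m, rfl⟩ := h4
    have hm u := ih m (by omega) u (by omega)
    cases u with
    | zero =>
      refine eventually_succ_eq_four_mul_of_add_two (c := 8) (fun t => ?_) (hm 0)
      push_cast
      exact solCount_ternaryForm_one m t
    | succ v =>
      refine eventually_succ_eq_four_mul_of_add_two (c := 32) (fun t => ?_) (hm v)
      push_cast
      exact solCount_ternaryForm_add_two (2 * v + 1) m t
  · exact eventually_solCount_ternaryForm_succ_of_not_four_dvd (2 * u) (by exact_mod_cast h4)

theorem exists_div_two_pow_eq {a : ℕ → ℕ} (h : ∀ᶠ t in atTop, a (t + 1) = 4 * a t) :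
    ∃ T, ∀ t ≥ T, (a t : ℚ) / 2 ^ (2 * t) = a T / 2 ^ (2 * T) := by
  obtain ⟨T, hT⟩ := eventually_atTop.1 h
  refine ⟨T, fun t ht => ?_⟩
  induction t, ht using Nat.le_induction with
  | base => rfl
  | succ t ht ih =>
    rw [hT t ht, ← ih, mul_add_one, pow_add]
    push_cast
    field_simp
    ring

theorem ZMod.sum_univ_eq_sum_range {M : Type*} [AddCommMonoid M] (m : ℕ) [NeZero m]
    (g : ZMod m → M) : ∑ x, g x = ∑ a ∈ range m, g a :=
  sum_nbij' ZMod.val (↑) (by simp [ZMod.val_lt]) (by simp) (by simp)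
    (fun a ha => ZMod.val_cast_of_lt (mem_range.1 ha)) (by simp)

theorem natCard_eq_solCount (k : ℕ) (n : ℤ) (t : ℕ) :
    Nat.card {w : ZMod (2 ^ t) × ZMod (2 ^ t) × ZMod (2 ^ t) //
      3 * w.1 ^ 2 - (2 : ZMod (2 ^ t)) ^ k * (w.2.1 ^ 2 + w.2.2 ^ 2 + w.2.1 * w.2.2)
        = (n : ZMod (2 ^ t))} = solCount (ternaryForm k) n t := by
  have hcond : ∀ x y z : ℕ, 3 * (x : ZMod (2 ^ t)) ^ 2 - 2 ^ k * ((y : ZMod (2 ^ t)) ^ 2 +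
      (z : ZMod (2 ^ t)) ^ 2 + y * z) = n ↔ ternaryForm k x y z ≡ n [ZMOD 2 ^ t] := by
    intro x y z
    have h := ZMod.intCast_eq_intCast_iff (ternaryForm k x y z) n (2 ^ t)
    push_cast [ternaryForm] at h
    exact h
  rw [Nat.card_eq_fintype_card, Fintype.card_subtype, card_filter]
  simp only [Fintype.sum_prod_type, ZMod.sum_univ_eq_sum_range, hcond, solCount]

/-- Let `u ≥ 0`. For every positive integer `n`, the local density at `2` of
`3x² − 2^(2u+3)(y² + z² + yz)` at `4n` equals twice the local density at `2` of
`3x² − 2^(2u+1)(y² + z² + yz)` at `n`. -/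
theorem localDensity_two_shift_anisotropic (u : ℕ) (n : ℕ) (hn : 0 < n) :
    ∃ d : ℚ,
      (∃ T : ℕ, ∀ t ≥ T,
        (Nat.card {w : ZMod (2 ^ t) × ZMod (2 ^ t) × ZMod (2 ^ t) //
            3 * w.1 ^ 2 - (2 : ZMod (2 ^ t)) ^ (2 * u + 1)
                * (w.2.1 ^ 2 + w.2.2 ^ 2 + w.2.1 * w.2.2)
              = (n : ZMod (2 ^ t))} : ℚ)
            / (2 : ℚ) ^ (2 * t)
          = d) ∧
      (∃ T : ℕ, ∀ t ≥ T,
        (Nat.card {w : ZMod (2 ^ t) × ZMod (2 ^ t) × ZMod (2 ^ t) //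
            3 * w.1 ^ 2 - (2 : ZMod (2 ^ t)) ^ (2 * u + 3)
                * (w.2.1 ^ 2 + w.2.2 ^ 2 + w.2.1 * w.2.2)
              = ((4 * n : ℕ) : ZMod (2 ^ t))} : ℚ)
            / (2 : ℚ) ^ (2 * t)
          = 2 * d) := by
  obtain ⟨T, hT⟩ := exists_div_two_pow_eq (eventually_solCount_ternaryForm_succ u n hn)
  refine ⟨solCount (ternaryForm (2 * u + 1)) n T / 2 ^ (2 * T), ⟨T, fun t ht => ?_⟩,
    ⟨T + 2, fun t ht => ?_⟩⟩
  · rw [← Int.cast_natCast (R := ZMod (2 ^ t)), natCard_eq_solCount]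
    exact hT t ht
  · obtain ⟨s, rfl⟩ : ∃ s, t = s + 2 := ⟨t - 2, by omega⟩
    rw [← Int.cast_natCast (R := ZMod (2 ^ (s + 2))), natCard_eq_solCount, Nat.cast_mul,
      Nat.cast_ofNat, solCount_ternaryForm_add_two, ← hT s (by omega), mul_add, pow_add]
    push_cast
    field_simp
    ring
end

section
/- Let u be a nonnegative integer. The local density at 2 of the ternary form 3·2^{2u+3}·x² − (y² + z² + yz) at n = 1 equals 3/2. -/
/-!
Write `N(y, z) = y² + z² + yz`. As `3·2^(2u+3)` is even, a solution is a choice of `x` together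
with a representation of the odd number `3·2^(2u+3)·x² - 1` by `N`, so it suffices that every odd
residue mod `2^(t+1)` has exactly `3·2^t` representations. Mod `2` these are the three nonzero
points of `𝔽₂²`. For `t ≥ 1`, a solution `(y, z)` mod `2^t` has the four lifts
`(y + 2^t b, z + 2^t c)` mod `2^(t+1)`, `b, c ∈ 𝔽₂`; since `2^(2t) ≡ 0 mod 2^(t+1)`, the lifted
equation is an affine equation `δ + z b + y c = 0` over `𝔽₂`, nondegenerate because `N(y, z)` odd
forces `(y, z) ≢ 0 mod 2`. So exactly two lifts are solutions, and the count doubles at each step.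
-/

open Finset

/-- The norm of `y - zω` in `ℤ[ω]`, `ω² + ω + 1 = 0`. -/
def eisensteinNorm {R : Type*} [CommRing R] (y z : R) : R := y ^ 2 + z ^ 2 + y * z

theorem map_eisensteinNorm {R S : Type*} [CommRing R] [CommRing S] (f : R →+* S) (y z : R) :
    f (eisensteinNorm y z) = eisensteinNorm (f y) (f z) := by
  simp only [eisensteinNorm, map_add, map_mul, map_pow]

namespace ZMod

def reduceTwoPow (t : ℕ) : ZMod (2 ^ (t + 1)) →+* ZMod (2 ^ t) :=
  castHom (pow_dvd_pow 2 t.le_succ) _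

def parityTwoPow (t : ℕ) : ZMod (2 ^ (t + 1)) →+* ZMod 2 :=
  castHom (dvd_pow_self 2 t.succ_ne_zero) _

def topDigit (t : ℕ) (b : ZMod 2) : ZMod (2 ^ (t + 1)) := 2 ^ t * b.val

variable {t : ℕ}

theorem two_pow_self_eq_zero (n : ℕ) : (2 : ZMod (2 ^ n)) ^ n = 0 := by
  exact_mod_cast natCast_self (2 ^ n)

theorem two_pow_ne_zero_of_lt {k n : ℕ} (h : k < n) : (2 : ZMod (2 ^ n)) ^ k ≠ 0 := by
  have h0 := natCast_eq_zero_iff (2 ^ k) (2 ^ n)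
  rw [Nat.pow_dvd_pow_iff_le_right (by norm_num)] at h0
  push_cast at h0
  simpa [h0] using h

theorem topDigit_injective : Function.Injective (topDigit t) := by
  have h01 : ∀ b : ZMod 2, b = 0 ∨ b = 1 := by decide
  have hne : topDigit t 0 ≠ topDigit t 1 := by
    simpa [topDigit, val_one] using (two_pow_ne_zero_of_lt t.lt_succ_self).symm
  intro b c hbc
  rcases h01 b with rfl | rfl <;> rcases h01 c with rfl | rfl
  exacts [rfl, absurd hbc hne, absurd hbc.symm hne, rfl]

theorem topDigit_eq_zero_iff {b : ZMod 2} : topDigit t b = 0 ↔ b = 0 :=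
  topDigit_injective.eq_iff' (by simp [topDigit])

theorem two_pow_mul_eq_topDigit (v : ZMod (2 ^ (t + 1))) :
    2 ^ t * v = topDigit t (parityTwoPow t v) := by
  rw [topDigit, parityTwoPow, castHom_apply, cast_eq_val, val_natCast]
  conv_lhs => rw [← natCast_zmod_val v, ← Nat.mod_add_div v.val 2]
  push_cast
  linear_combination ((v.val / 2 : ℕ) : ZMod (2 ^ (t + 1))) * two_pow_self_eq_zero (t + 1)

theorem reduceTwoPow_topDigit (b : ZMod 2) : reduceTwoPow t (topDigit t b) = 0 := by
  rw [topDigit, map_mul, map_pow, map_ofNat, two_pow_self_eq_zero, zero_mul]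

theorem parityTwoPow_topDigit (ht : t ≠ 0) (b : ZMod 2) : parityTwoPow t (topDigit t b) = 0 := by
  have : (2 : ZMod 2) = 0 := rfl
  rw [topDigit, map_mul, map_pow, map_ofNat, this, zero_pow ht, zero_mul]

theorem exists_topDigit_eq_of_reduceTwoPow_eq_zero {v : ZMod (2 ^ (t + 1))}
    (hv : reduceTwoPow t v = 0) : ∃ b, topDigit t b = v := by
  rw [reduceTwoPow, castHom_apply, cast_eq_val, natCast_eq_zero_iff] at hv
  obtain ⟨k, hk⟩ := hv
  have hk2 : k < 2 := by
    have := v.val_lt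
    rw [hk, pow_succ] at this
    exact Nat.lt_of_mul_lt_mul_left this
  refine ⟨k, ?_⟩
  rw [topDigit, val_natCast, Nat.mod_eq_of_lt hk2, ← natCast_zmod_val v, hk]
  push_cast; ring

theorem card_filter_reduceTwoPow_fiber (y₀ z₀ : ZMod (2 ^ (t + 1)))
    (P : ZMod (2 ^ (t + 1)) × ZMod (2 ^ (t + 1)) → Prop) [DecidablePred P] :
    #{p | P p ∧ reduceTwoPow t p.1 = reduceTwoPow t y₀ ∧ reduceTwoPow t p.2 = reduceTwoPow t z₀}
      = #{e : ZMod 2 × ZMod 2 | P (y₀ + topDigit t e.1, z₀ + topDigit t e.2)} := by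
  symm
  refine card_bij (fun e _ => (y₀ + topDigit t e.1, z₀ + topDigit t e.2)) ?_ ?_ ?_
  · intro e he
    simp only [mem_filter, mem_univ, true_and] at he ⊢
    simp [he, map_add, reduceTwoPow_topDigit]
  · intro e _ e' _ h
    simp only [Prod.mk.injEq, add_right_inj] at h
    exact Prod.ext (topDigit_injective h.1) (topDigit_injective h.2)
  · intro p hp
    simp only [mem_filter, mem_univ, true_and] at hp
    obtain ⟨hP, hy, hz⟩ := hp
    obtain ⟨b, hb⟩ := exists_topDigit_eq_of_reduceTwoPow_eq_zero (v := p.1 - y₀)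
      (by rw [map_sub, hy, sub_self])
    obtain ⟨c, hc⟩ := exists_topDigit_eq_of_reduceTwoPow_eq_zero (v := p.2 - z₀)
      (by rw [map_sub, hz, sub_self])
    refine ⟨(b, c), ?_, ?_⟩
    · simpa [mem_filter, hb, hc] using hP
    · simp [hb, hc]

theorem eisensteinNorm_add_two_pow_mul (ht : t ≠ 0) (y z β γ : ZMod (2 ^ (t + 1))) :
    eisensteinNorm (y + 2 ^ t * β) (z + 2 ^ t * γ)
      = eisensteinNorm y z + 2 ^ t * (z * β + y * γ) := by
  obtain ⟨s, rfl⟩ := Nat.exists_eq_add_one_of_ne_zero ht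
  unfold eisensteinNorm
  linear_combination
    (y * β + z * γ + 2 ^ s * (β ^ 2 + β * γ + γ ^ 2)) * two_pow_self_eq_zero (s + 2)

end ZMod

open ZMod

theorem card_affine_eq_zero_zmod_two {α β : ZMod 2} (h : (α, β) ≠ 0) (δ : ZMod 2) :
    #{e : ZMod 2 × ZMod 2 | δ + α * e.1 + β * e.2 = 0} = 2 := by
  revert α β δ; decide

theorem card_eisensteinNorm_fiber {t : ℕ} (ht : t ≠ 0) {a y₀ z₀ : ZMod (2 ^ (t + 1))}
    (ha : parityTwoPow t a = 1)
    (h : reduceTwoPow t (eisensteinNorm y₀ z₀) = reduceTwoPow t a) :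
    #{p : ZMod (2 ^ (t + 1)) × ZMod (2 ^ (t + 1)) | eisensteinNorm p.1 p.2 = a ∧
      reduceTwoPow t p.1 = reduceTwoPow t y₀ ∧ reduceTwoPow t p.2 = reduceTwoPow t z₀} = 2 := by
  obtain ⟨δ, hδ⟩ := exists_topDigit_eq_of_reduceTwoPow_eq_zero
    (v := eisensteinNorm y₀ z₀ - a) (by rw [map_sub, h, sub_self])
  have hlift : ∀ b c : ZMod 2, eisensteinNorm (y₀ + topDigit t b) (z₀ + topDigit t c)
      = a + topDigit t (δ + parityTwoPow t z₀ * b + parityTwoPow t y₀ * c) := by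
    intro b c
    rw [topDigit, topDigit, eisensteinNorm_add_two_pow_mul ht, eq_add_of_sub_eq' hδ.symm,
      add_assoc, topDigit, ← mul_add, two_pow_mul_eq_topDigit]
    simp [add_assoc]
  have hodd : (parityTwoPow t z₀, parityTwoPow t y₀) ≠ 0 := by
    intro h0
    simp only [Prod.mk_eq_zero] at h0
    have := congrArg (parityTwoPow t) (eq_add_of_sub_eq' hδ.symm)
    rw [map_eisensteinNorm, h0.1, h0.2, map_add, ha, parityTwoPow_topDigit ht] at this
    exact absurd this (by decide)
  have hzero : ∀ ℓ, a + topDigit t ℓ = a ↔ ℓ = 0 := fun ℓ => by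
    rw [add_eq_left, topDigit_eq_zero_iff]
  rw [card_filter_reduceTwoPow_fiber]
  simp only [hlift, hzero]
  exact card_affine_eq_zero_zmod_two hodd δ

theorem card_eisensteinNorm_succ {t : ℕ} (ht : t ≠ 0) {a : ZMod (2 ^ (t + 1))}
    (ha : parityTwoPow t a = 1) :
    #{p : ZMod (2 ^ (t + 1)) × ZMod (2 ^ (t + 1)) | eisensteinNorm p.1 p.2 = a}
      = 2 * #{q : ZMod (2 ^ t) × ZMod (2 ^ t) | eisensteinNorm q.1 q.2 = reduceTwoPow t a} := by
  have hmaps : Set.MapsTo (Prod.map (reduceTwoPow t) (reduceTwoPow t))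
      ({p : ZMod (2 ^ (t + 1)) × ZMod (2 ^ (t + 1)) | eisensteinNorm p.1 p.2 = a} : Finset _)
      ({q : ZMod (2 ^ t) × ZMod (2 ^ t) | eisensteinNorm q.1 q.2 = reduceTwoPow t a} :
        Finset _) := by
    intro p hp
    simp_all [← map_eisensteinNorm]
  rw [card_eq_sum_card_fiberwise hmaps, sum_const_nat (m := 2), mul_comm]
  rintro ⟨y, z⟩ hq
  obtain ⟨y₀, rfl⟩ := ZMod.ringHom_surjective (reduceTwoPow t) y
  obtain ⟨z₀, rfl⟩ := ZMod.ringHom_surjective (reduceTwoPow t) z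
  rw [mem_filter, ← map_eisensteinNorm] at hq
  simp only [filter_filter, Prod.ext_iff, Prod.map_fst, Prod.map_snd]
  exact card_eisensteinNorm_fiber ht ha hq.2

theorem card_eisensteinNorm_eq (t : ℕ) {a : ZMod (2 ^ (t + 1))} (ha : parityTwoPow t a = 1) :
    #{p : ZMod (2 ^ (t + 1)) × ZMod (2 ^ (t + 1)) | eisensteinNorm p.1 p.2 = a} = 3 * 2 ^ t := by
  induction t with
  | zero => revert a; decide
  | succ t ih =>
    have hred : parityTwoPow t (reduceTwoPow (t + 1) a) = 1 := by
      rw [← RingHom.comp_apply,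
        Subsingleton.elim ((parityTwoPow t).comp _) (parityTwoPow (t + 1)), ha]
    rw [card_eisensteinNorm_succ t.succ_ne_zero ha, ih hred, pow_succ]
    ring

theorem card_sub_eisensteinNorm_eq_sum {R : Type*} [CommRing R] [Fintype R] [DecidableEq R]
    (g : R → R) (n : R) :
    #{w : R × R × R | g w.1 - eisensteinNorm w.2.1 w.2.2 = n}
      = ∑ x, #{q : R × R | eisensteinNorm q.1 q.2 = g x - n} := by
  simp only [card_filter, Fintype.sum_prod_type]
  refine sum_congr rfl fun x _ => sum_congr rfl fun y _ => sum_congr rfl fun z _ => ?_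
  congr 1
  exact propext (by constructor <;> intro h <;> linear_combination -h)

/-- Let `u ≥ 0`. The local density at `2` of the ternary form
`3·2^(2u+3)·x² − (y² + z² + yz)` at `n = 1` equals `3/2`. -/
theorem localDensity_two_anisotropic_at_one (u : ℕ) :
    ∃ T : ℕ, ∀ t ≥ T,
      (Nat.card {w : ZMod (2 ^ t) × ZMod (2 ^ t) × ZMod (2 ^ t) //
          3 * (2 : ZMod (2 ^ t)) ^ (2 * u + 3) * w.1 ^ 2
            - (w.2.1 ^ 2 + w.2.2 ^ 2 + w.2.1 * w.2.2) = 1} : ℚ)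
          / (2 : ℚ) ^ (2 * t)
        = 3 / 2 := by
  refine ⟨1, fun t ht => ?_⟩
  obtain ⟨s, rfl⟩ := Nat.exists_eq_add_of_le' ht
  have hodd : ∀ x : ZMod (2 ^ (s + 1)), parityTwoPow s (3 * 2 ^ (2 * u + 3) * x ^ 2 - 1) = 1 := by
    intro x
    have h2 : (2 : ZMod 2) = 0 := rfl
    rw [map_sub, map_mul, map_mul, map_pow, map_pow, map_ofNat, map_ofNat, h2,
      zero_pow (by omega), map_one, mul_zero, zero_mul, zero_sub]
    decide
  have hcard : Nat.card {w : ZMod (2 ^ (s + 1)) × ZMod (2 ^ (s + 1)) × ZMod (2 ^ (s + 1)) //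
      3 * (2 : ZMod (2 ^ (s + 1))) ^ (2 * u + 3) * w.1 ^ 2
        - (w.2.1 ^ 2 + w.2.2 ^ 2 + w.2.1 * w.2.2) = 1} = 2 ^ (s + 1) * (3 * 2 ^ s) := by
    rw [Nat.card_eq_fintype_card, Fintype.card_subtype]
    change #{w : ZMod (2 ^ (s + 1)) × ZMod (2 ^ (s + 1)) × ZMod (2 ^ (s + 1)) |
      3 * 2 ^ (2 * u + 3) * w.1 ^ 2 - eisensteinNorm w.2.1 w.2.2 = 1} = _
    rw [card_sub_eisensteinNorm_eq_sum (fun x => 3 * 2 ^ (2 * u + 3) * x ^ 2),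
      sum_const_nat fun x _ => card_eisensteinNorm_eq s (hodd x), card_univ, ZMod.card]
  rw [hcard]
  push_cast
  field_simp
  ring
end

section
/- Let v be a nonnegative integer. The local density at 2 of the ternary form −2^{v+2}·x² − y·z at n = 1 equals 1/2. -/
/-! Modulo `2 ^ t` the element `2` is nilpotent, so `-2^(v+2)·x² - 1` is a unit for every `x`.
Hence `y·z = -2^(v+2)·x² - 1` forces `y` to be a unit, which then determines `z`: there are
`2^t · φ(2^t) = 2^(2t-1)` solutions. -/

section UnitFactorizations

variable {R : Type*} [CommRing R]

def unitsEquivMulEq (u : Rˣ) : Rˣ ≃ {p : R × R // p.1 * p.2 = u} where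
  toFun y := ⟨(y, ↑(y⁻¹ * u)), by simp⟩
  invFun p :=
    { val := p.1.1
      inv := p.1.2 * ↑u⁻¹
      val_inv := by rw [← mul_assoc, p.2, Units.mul_inv]
      inv_val := by rw [mul_right_comm, mul_comm p.1.2, p.2, Units.mul_inv] }
  left_inv y := Units.ext rfl
  right_inv := by
    rintro ⟨⟨y, z⟩, -⟩
    ext
    · rfl
    · show z * ↑u⁻¹ * u = z
      rw [mul_assoc, Units.inv_mul, mul_one]

theorem Nat.card_subtype_mul_eq_unit (u : Rˣ) :
    Nat.card {p : R × R // p.1 * p.2 = u} = Nat.card Rˣ :=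
  (Nat.card_congr (unitsEquivMulEq u)).symm

theorem Nat.card_subtype_mul_eq_of_isUnit [Fintype R] (f : R → R) (hf : ∀ x, IsUnit (f x)) :
    Nat.card {w : R × R × R // w.2.1 * w.2.2 = f w.1} = Nat.card R * Nat.card Rˣ := by
  refine (Nat.card_congr
    (Equiv.subtypeProdEquivSigmaSubtype fun x (p : R × R) => p.1 * p.2 = f x)).trans ?_
  have hfiber x : Nat.card {p : R × R // p.1 * p.2 = f x} = Nat.card Rˣ :=
    (hf x).unit_spec ▸ Nat.card_subtype_mul_eq_unit (hf x).unit
  rw [Nat.card_sigma, Finset.sum_congr rfl fun x _ => hfiber x, Finset.sum_const,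
    Finset.card_univ, smul_eq_mul, Nat.card_eq_fintype_card (α := R)]

theorem Nat.card_subtype_nilpotent_mul_sq_sub_mul_eq_one [Fintype R] {c : R} (hc : IsNilpotent c) :
    Nat.card {w : R × R × R // c * w.1 ^ 2 - w.2.1 * w.2.2 = 1} = Nat.card R * Nat.card Rˣ := by
  have hunit x : IsUnit (c * x ^ 2 - 1) :=
    ((Commute.all _ _).isNilpotent_mul_right hc).isUnit_sub_one
  rw [← Nat.card_subtype_mul_eq_of_isUnit _ hunit]
  congr! 3 with w
  constructor <;> intro h <;> linear_combination -h

end UnitFactorizations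

theorem ZMod.isNilpotent_natCast_self_pow (p t : ℕ) : IsNilpotent (p : ZMod (p ^ t)) :=
  ⟨t, by rw [← Nat.cast_pow, ZMod.natCast_self]⟩

theorem ZMod.card_units_prime_pow {p t : ℕ} (hp : p.Prime) (ht : 1 ≤ t) :
    Nat.card (ZMod (p ^ t))ˣ = p ^ (t - 1) * (p - 1) := by
  have : NeZero (p ^ t) := ⟨pow_ne_zero _ hp.ne_zero⟩
  rw [Nat.card_eq_fintype_card, ZMod.card_units_eq_totient, Nat.totient_prime_pow hp ht]

/-- Let `v ≥ 0`. The local density at `2` of the ternary form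
`−2^(v+2)·x² − y·z` at `n = 1` equals `1/2`. -/
theorem localDensity_two_isotropic_at_one (v : ℕ) :
    ∃ T : ℕ, ∀ t ≥ T,
      (Nat.card {w : ZMod (2 ^ t) × ZMod (2 ^ t) × ZMod (2 ^ t) //
          -(2 : ZMod (2 ^ t)) ^ (v + 2) * w.1 ^ 2 - w.2.1 * w.2.2 = 1} : ℚ)
          / (2 : ℚ) ^ (2 * t)
        = 1 / 2 := by
  refine ⟨1, fun t ht => ?_⟩
  have : NeZero (2 ^ t) := ⟨pow_ne_zero _ two_ne_zero⟩
  have hc : IsNilpotent (-(2 : ZMod (2 ^ t)) ^ (v + 2)) :=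
    ((ZMod.isNilpotent_natCast_self_pow 2 t).pow_of_pos (by omega)).neg
  rw [Nat.card_subtype_nilpotent_mul_sq_sub_mul_eq_one hc,
    ZMod.card_units_prime_pow Nat.prime_two ht, Nat.card_zmod]
  obtain ⟨s, rfl⟩ := Nat.exists_eq_add_of_le' ht
  push_cast
  rw [div_eq_div_iff (by positivity) two_ne_zero]
  ring
end

section
/- Let 𝒪 be an order in a definite quaternion algebra over ℚ, written as 𝒪 = ℤ + ℤα₁ + ℤα₂ + ℤα₃ with trd(α₁) = trd(α₂) = 0 and trd(α₃) = 1. Define the ternary quadratic form f_{S⁰}(x,y,z) = nrd(x·2α₁ + y·2α₂ + z·(2α₃ − 1)). Then for all integers n and r, the number of integer triples (x,y,z) with f_{S⁰}(x,y,z) = 4n − r² equals the number of elements α ∈ 𝒪 satisfying α² − r·α + n = 0, i.e. with trd(α) = r and nrd(α) = n. -/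
/-!
Writing `α = w + xα₁ + yα₂ + zα₃ ∈ 𝒪`, the trace conditions give `trd α = 2w + z` and
`α - ᾱ = x·2α₁ + y·2α₂ + z·(2α₃ − 1)`, whose norm is the discriminant `4 nrd α − (trd α)²`.
So `α ↦ (x, y, z)` sends roots of `X² − rX + n` to representations of `4n − r²`, and it is
injective because `w = (r − z)/2` is forced. Conversely, a representation `(x, y, z)` lifts to
`α = (r − z)/2 + xα₁ + yα₂ + zα₃`, provided `r ≡ z (mod 2)`: this holds because
`γ = xα₁ + yα₂ + zα₃ ∈ 𝒪` has integral norm, so `4n − r² = 4 nrd γ − z² ≡ −z² (mod 4)`.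
-/

open Quaternion

theorem range_vecCons_four {α : Type*} (x₀ x₁ x₂ x₃ : α) :
    Set.range ![x₀, x₁, x₂, x₃] = {x₀, x₁, x₂, x₃} := by
  simp only [Matrix.range_cons, Matrix.range_empty, Set.union_empty, Set.singleton_union]

theorem Int.two_dvd_sub_of_four_dvd_sq_sub_sq {r z : ℤ} (h : 4 ∣ r ^ 2 - z ^ 2) : 2 ∣ r - z := by
  have heven : Even (r ^ 2 - z ^ 2) := even_iff_two_dvd.mpr ((Int.dvd_mul_left 2 2).trans h)
  rw [Int.even_sub, Int.even_pow' two_ne_zero, Int.even_pow' two_ne_zero, ← Int.even_sub] at heven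
  exact heven.two_dvd

namespace QuaternionAlgebra

variable {R : Type*} [CommRing R] {c₁ c₂ c₃ : R}

instance [CharZero R] : CharZero ℍ[R,c₁,c₂,c₃] :=
  ⟨fun m n h => by simpa using congrArg re h⟩

theorem self_sub_star_mul_star (u : ℍ[R,c₁,c₂,c₃]) :
    (u - star u) * star (u - star u) = 4 * (u * star u) - (u + star u) ^ 2 := by
  ext <;> simp [pow_two] <;> ring

end QuaternionAlgebra

section

variable {a b : ℚ} {α₁ α₂ α₃ : ℍ[ℚ, a, b]}

def zSpan (α₁ α₂ α₃ : ℍ[ℚ, a, b]) : Submodule ℤ ℍ[ℚ, a, b] :=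
  Submodule.span ℤ {1, α₁, α₂, α₃}

def basisComb (α₁ α₂ α₃ : ℍ[ℚ, a, b]) (w : ℤ) (v : ℤ × ℤ × ℤ) : ℍ[ℚ, a, b] :=
  w + v.1 * α₁ + v.2.1 * α₂ + v.2.2 * α₃

def sZeroComb (α₁ α₂ α₃ : ℍ[ℚ, a, b]) (v : ℤ × ℤ × ℤ) : ℍ[ℚ, a, b] :=
  v.1 * (2 * α₁) + v.2.1 * (2 * α₂) + v.2.2 * (2 * α₃ - 1)

theorem basisComb_eq_smul (w : ℤ) (v : ℤ × ℤ × ℤ) :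
    basisComb α₁ α₂ α₃ w v
      = (w : ℚ) • (1 : ℍ[ℚ, a, b]) + (v.1 : ℚ) • α₁ + (v.2.1 : ℚ) • α₂ + (v.2.2 : ℚ) • α₃ := by
  simp only [basisComb, ← zsmul_eq_mul, Int.cast_smul_eq_zsmul, zsmul_one]

theorem mem_zSpan_iff_exists_basisComb {u : ℍ[ℚ, a, b]} :
    u ∈ zSpan α₁ α₂ α₃ ↔ ∃ w v, basisComb α₁ α₂ α₃ w v = u := by
  rw [zSpan, ← range_vecCons_four, Submodule.mem_span_range_iff_exists_fun]
  constructor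
  · rintro ⟨c, rfl⟩
    exact ⟨c 0, (c 1, c 2, c 3), by simp [basisComb, Fin.sum_univ_four, zsmul_eq_mul]⟩
  · rintro ⟨w, v, rfl⟩
    exact ⟨![w, v.1, v.2.1, v.2.2], by simp [basisComb, Fin.sum_univ_four, zsmul_eq_mul]⟩

theorem basisComb_mem_zSpan (w : ℤ) (v : ℤ × ℤ × ℤ) : basisComb α₁ α₂ α₃ w v ∈ zSpan α₁ α₂ α₃ :=
  mem_zSpan_iff_exists_basisComb.mpr ⟨w, v, rfl⟩

section LinearIndependent

variable (hli : LinearIndependent ℚ ![1, α₁, α₂, α₃])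
include hli

theorem eq_zero_of_smul_add_smul_eq_zero {w x y z : ℚ}
    (h : w • (1 : ℍ[ℚ, a, b]) + x • α₁ + y • α₂ + z • α₃ = 0) :
    w = 0 ∧ x = 0 ∧ y = 0 ∧ z = 0 := by
  have := Fintype.linearIndependent_iff.mp hli ![w, x, y, z]
    (by simpa [Fin.sum_univ_four, add_assoc] using h)
  exact ⟨this 0, this 1, this 2, this 3⟩

theorem basisComb_inj {w w' : ℤ} {v v' : ℤ × ℤ × ℤ} :
    basisComb α₁ α₂ α₃ w v = basisComb α₁ α₂ α₃ w' v' ↔ w = w' ∧ v = v' := by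
  refine ⟨fun h => ?_, fun ⟨hw, hv⟩ => hw ▸ hv ▸ rfl⟩
  rw [basisComb_eq_smul, basisComb_eq_smul] at h
  obtain ⟨hw, hx, hy, hz⟩ := eq_zero_of_smul_add_smul_eq_zero hli
    (w := w - w') (x := v.1 - v'.1) (y := v.2.1 - v'.2.1) (z := v.2.2 - v'.2.2)
    (by linear_combination (norm := module) h)
  simp only [sub_eq_zero, Int.cast_inj] at hw hx hy hz
  exact ⟨hw, Prod.ext hx (Prod.ext hy hz)⟩

theorem eq_of_coe_eq_basisComb {q : ℚ} {w : ℤ} {v : ℤ × ℤ × ℤ}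
    (h : (q : ℍ[ℚ, a, b]) = basisComb α₁ α₂ α₃ w v) : q = w := by
  rw [basisComb_eq_smul, ← QuaternionAlgebra.coe_algebraMap, Algebra.algebraMap_eq_smul_one] at h
  obtain ⟨hw, -⟩ := eq_zero_of_smul_add_smul_eq_zero hli
    (w := q - w) (x := - v.1) (y := - v.2.1) (z := - v.2.2)
    (by linear_combination (norm := module) h)
  linarith

end LinearIndependent

theorem star_basisComb (w : ℤ) (v : ℤ × ℤ × ℤ) :
    star (basisComb α₁ α₂ α₃ w v)
      = w + v.1 * star α₁ + v.2.1 * star α₂ + v.2.2 * star α₃ := by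
  simp only [basisComb, star_add, star_mul, star_intCast, (Int.cast_commute _ _).eq]

section Trace

variable (h₁ : α₁ + star α₁ = 0) (h₂ : α₂ + star α₂ = 0) (h₃ : α₃ + star α₃ = 1)
include h₁ h₂ h₃

theorem basisComb_add_star (w : ℤ) (v : ℤ × ℤ × ℤ) :
    basisComb α₁ α₂ α₃ w v + star (basisComb α₁ α₂ α₃ w v)
      = ((2 * w + v.2.2 : ℤ) : ℍ[ℚ, a, b]) := by
  rw [star_basisComb]
  simp only [basisComb, ← zsmul_eq_mul]
  rw [Int.cast_add, Int.cast_mul, Int.cast_two, two_mul, ← Int.smul_one_eq_cast v.2.2]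
  linear_combination (norm := module) v.1 • h₁ + v.2.1 • h₂ + v.2.2 • h₃

theorem basisComb_sub_star (w : ℤ) (v : ℤ × ℤ × ℤ) :
    basisComb α₁ α₂ α₃ w v - star (basisComb α₁ α₂ α₃ w v) = sZeroComb α₁ α₂ α₃ v := by
  rw [star_basisComb]
  simp only [basisComb, sZeroComb, ← zsmul_eq_mul, two_mul]
  linear_combination (norm := module) -(v.1 • h₁ + v.2.1 • h₂ + v.2.2 • h₃)

theorem sZeroComb_mul_star (w : ℤ) (v : ℤ × ℤ × ℤ) :
    sZeroComb α₁ α₂ α₃ v * star (sZeroComb α₁ α₂ α₃ v)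
      = 4 * (basisComb α₁ α₂ α₃ w v * star (basisComb α₁ α₂ α₃ w v))
        - ((2 * w + v.2.2 : ℤ) : ℍ[ℚ, a, b]) ^ 2 := by
  rw [← basisComb_sub_star h₁ h₂ h₃ w, QuaternionAlgebra.self_sub_star_mul_star,
    basisComb_add_star h₁ h₂ h₃]

theorem sZeroComb_mul_star_of_add_star_of_mul_star {w n r : ℤ} {v : ℤ × ℤ × ℤ}
    (htr : basisComb α₁ α₂ α₃ w v + star (basisComb α₁ α₂ α₃ w v) = r)
    (hnrd : basisComb α₁ α₂ α₃ w v * star (basisComb α₁ α₂ α₃ w v) = n) :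
    sZeroComb α₁ α₂ α₃ v * star (sZeroComb α₁ α₂ α₃ v) = ((4 * n - r ^ 2 : ℤ) : ℍ[ℚ, a, b]) := by
  rw [sZeroComb_mul_star h₁ h₂ h₃ w, ← basisComb_add_star h₁ h₂ h₃, htr, hnrd]
  push_cast
  rfl

section Order

variable (hli : LinearIndependent ℚ ![1, α₁, α₂, α₃])
  (hmul : ∀ x ∈ zSpan α₁ α₂ α₃, ∀ y ∈ zSpan α₁ α₂ α₃, x * y ∈ zSpan α₁ α₂ α₃)
include hli hmul

theorem exists_basisComb_mul_star_eq_intCast (w : ℤ) (v : ℤ × ℤ × ℤ) :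
    ∃ m : ℤ, basisComb α₁ α₂ α₃ w v * star (basisComb α₁ α₂ α₃ w v) = m := by
  set u := basisComb α₁ α₂ α₃ w v
  have hu : u ∈ zSpan α₁ α₂ α₃ := basisComb_mem_zSpan w v
  have htrace : u + star u ∈ zSpan α₁ α₂ α₃ := by
    rw [basisComb_add_star h₁ h₂ h₃]
    simpa [basisComb] using basisComb_mem_zSpan (α₁ := α₁) (α₂ := α₂) (α₃ := α₃) (2 * w + v.2.2) 0
  have hstar : star u ∈ zSpan α₁ α₂ α₃ := by
    simpa using sub_mem htrace hu
  obtain ⟨w', v', hw'⟩ :=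
    mem_zSpan_iff_exists_basisComb.mp (hmul u hu (star u) hstar)
  refine ⟨w', ?_⟩
  rw [QuaternionAlgebra.mul_star_eq_coe, eq_of_coe_eq_basisComb hli
    ((QuaternionAlgebra.mul_star_eq_coe u).symm.trans hw'.symm), QuaternionAlgebra.coe_intCast]

theorem add_star_and_mul_star_of_sZeroComb_mul_star {n r : ℤ} {v : ℤ × ℤ × ℤ}
    (hv : sZeroComb α₁ α₂ α₃ v * star (sZeroComb α₁ α₂ α₃ v)
      = ((4 * n - r ^ 2 : ℤ) : ℍ[ℚ, a, b])) :
    basisComb α₁ α₂ α₃ ((r - v.2.2) / 2) v + star (basisComb α₁ α₂ α₃ ((r - v.2.2) / 2) v) = r ∧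
      basisComb α₁ α₂ α₃ ((r - v.2.2) / 2) v * star (basisComb α₁ α₂ α₃ ((r - v.2.2) / 2) v)
        = n := by
  have hparity : 2 ∣ r - v.2.2 := by
    obtain ⟨m, hm⟩ := exists_basisComb_mul_star_eq_intCast h₁ h₂ h₃ hli hmul 0 v
    rw [sZeroComb_mul_star h₁ h₂ h₃ 0, hm] at hv
    have : 4 * m - (2 * 0 + v.2.2) ^ 2 = 4 * n - r ^ 2 := by exact_mod_cast hv
    exact Int.two_dvd_sub_of_four_dvd_sq_sub_sq ⟨n - m, by linarith⟩
  have htr : 2 * ((r - v.2.2) / 2) + v.2.2 = r := by omega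
  obtain ⟨m, hm⟩ := exists_basisComb_mul_star_eq_intCast h₁ h₂ h₃ hli hmul ((r - v.2.2) / 2) v
  rw [sZeroComb_mul_star h₁ h₂ h₃ ((r - v.2.2) / 2), hm, htr] at hv
  have hmn : m = n := by
    have : 4 * m - r ^ 2 = 4 * n - r ^ 2 := by exact_mod_cast hv
    linarith
  exact ⟨by rw [basisComb_add_star h₁ h₂ h₃, htr], by rw [hm, hmn]⟩

end Order

end Trace

end

theorem card_repr_fS0_eq_card_roots_general (a b : ℚ)
    (α₁ α₂ α₃ : ℍ[ℚ, a, b])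
    (h₁ : α₁ + star α₁ = 0) (h₂ : α₂ + star α₂ = 0) (h₃ : α₃ + star α₃ = 1)
    (hfull : Submodule.span ℚ ({1, α₁, α₂, α₃} : Set ℍ[ℚ, a, b]) = ⊤)
    (hmul : ∀ x ∈ Submodule.span ℤ ({1, α₁, α₂, α₃} : Set ℍ[ℚ, a, b]),
      ∀ y ∈ Submodule.span ℤ ({1, α₁, α₂, α₃} : Set ℍ[ℚ, a, b]),
        x * y ∈ Submodule.span ℤ ({1, α₁, α₂, α₃} : Set ℍ[ℚ, a, b]))
    (n r : ℤ) :
    Nat.card {v : ℤ × ℤ × ℤ //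
        ((v.1 : ℍ[ℚ, a, b]) * (2 * α₁) + (v.2.1 : ℍ[ℚ, a, b]) * (2 * α₂)
            + (v.2.2 : ℍ[ℚ, a, b]) * (2 * α₃ - 1))
          * star ((v.1 : ℍ[ℚ, a, b]) * (2 * α₁) + (v.2.1 : ℍ[ℚ, a, b]) * (2 * α₂)
            + (v.2.2 : ℍ[ℚ, a, b]) * (2 * α₃ - 1))
          = ((4 * n - r ^ 2 : ℤ) : ℍ[ℚ, a, b])}
      = Nat.card {α : ℍ[ℚ, a, b] //
          α ∈ Submodule.span ℤ ({1, α₁, α₂, α₃} : Set ℍ[ℚ, a, b]) ∧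
          α + star α = ((r : ℤ) : ℍ[ℚ, a, b]) ∧
          α * star α = ((n : ℤ) : ℍ[ℚ, a, b])} := by
  have hli : LinearIndependent ℚ ![1, α₁, α₂, α₃] :=
    linearIndependent_of_top_le_span_of_card_eq_finrank (by rw [range_vecCons_four, hfull])
      (by simp [QuaternionAlgebra.finrank_eq_four])
  refine Nat.card_congr (Equiv.ofBijective
    (fun v => ⟨basisComb α₁ α₂ α₃ ((r - v.1.2.2) / 2) v.1, basisComb_mem_zSpan _ _,
      add_star_and_mul_star_of_sZeroComb_mul_star h₁ h₂ h₃ hli hmul v.2⟩) ⟨?_, ?_⟩)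
  · rintro ⟨v, _⟩ ⟨v', _⟩ h
    exact Subtype.ext ((basisComb_inj hli).mp (congrArg Subtype.val h)).2
  · rintro ⟨α, hα, htr, hnrd⟩
    obtain ⟨w, v, rfl⟩ := mem_zSpan_iff_exists_basisComb.mp hα
    have hw : 2 * w + v.2.2 = r :=
      Int.cast_injective (α := ℍ[ℚ, a, b]) (by rw [← basisComb_add_star h₁ h₂ h₃, htr])
    refine ⟨⟨v, sZeroComb_mul_star_of_add_star_of_mul_star h₁ h₂ h₃ htr hnrd⟩, Subtype.ext ?_⟩
    change basisComb α₁ α₂ α₃ ((r - v.2.2) / 2) v = basisComb α₁ α₂ α₃ w v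
    congr 1
    omega

/-- Let `𝒪 = ℤ + ℤα₁ + ℤα₂ + ℤα₃` be an order in a definite quaternion algebra
`(a,b/ℚ)` (so `a < 0`, `b < 0`) with `trd(α₁) = trd(α₂) = 0` and `trd(α₃) = 1`.
Define `f_{S⁰}(x,y,z) = nrd(x·2α₁ + y·2α₂ + z·(2α₃ − 1))`. Then for all integers `n`
and `r`, the number of integer triples `(x,y,z)` with `f_{S⁰}(x,y,z) = 4n − r²` equals
the number of `α ∈ 𝒪` with `trd(α) = r` and `nrd(α) = n`, i.e. roots of `x² − rx + n`
in `𝒪`. Here `trd(α) = α + star α` and `nrd(α) = α * star α`. -/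
theorem card_repr_fS0_eq_card_roots (a b : ℚ) (hadef : a < 0) (hbdef : b < 0)
    (α₁ α₂ α₃ : ℍ[ℚ, a, b])
    (h₁ : α₁ + star α₁ = 0) (h₂ : α₂ + star α₂ = 0) (h₃ : α₃ + star α₃ = 1)
    (hfull : Submodule.span ℚ ({1, α₁, α₂, α₃} : Set ℍ[ℚ, a, b]) = ⊤)
    (hmul : ∀ x ∈ Submodule.span ℤ ({1, α₁, α₂, α₃} : Set ℍ[ℚ, a, b]),
      ∀ y ∈ Submodule.span ℤ ({1, α₁, α₂, α₃} : Set ℍ[ℚ, a, b]),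
        x * y ∈ Submodule.span ℤ ({1, α₁, α₂, α₃} : Set ℍ[ℚ, a, b]))
    (n r : ℤ) :
    Nat.card {v : ℤ × ℤ × ℤ //
        ((v.1 : ℍ[ℚ, a, b]) * (2 * α₁) + (v.2.1 : ℍ[ℚ, a, b]) * (2 * α₂)
            + (v.2.2 : ℍ[ℚ, a, b]) * (2 * α₃ - 1))
          * star ((v.1 : ℍ[ℚ, a, b]) * (2 * α₁) + (v.2.1 : ℍ[ℚ, a, b]) * (2 * α₂)
            + (v.2.2 : ℍ[ℚ, a, b]) * (2 * α₃ - 1))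
          = ((4 * n - r ^ 2 : ℤ) : ℍ[ℚ, a, b])}
      = Nat.card {α : ℍ[ℚ, a, b] //
          α ∈ Submodule.span ℤ ({1, α₁, α₂, α₃} : Set ℍ[ℚ, a, b]) ∧
          α + star α = ((r : ℤ) : ℍ[ℚ, a, b]) ∧
          α * star α = ((n : ℤ) : ℍ[ℚ, a, b])} :=
  card_repr_fS0_eq_card_roots_general a b α₁ α₂ α₃ h₁ h₂ h₃ hfull hmul n r
end
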